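/- arXiv:1403.3204 — 7 statements merged into one kernel-verified Lean document; each statement's English description precedes it below -/
import Mathlib

section
/- Let C be a nonempty closed convex subset of a real Hilbert space H, let A : C → H be an α-inverse strongly monotone mapping (α > 0), and let T : C → C be a nonexpansive mapping such that F = F(T) ∩ Ω is nonempty, where Ω is the solution set of VI(C, A). Let {λ_n} ⊂ [a, b] for some a, b with 0 < a ≤ b < 2α and {α_n} ⊂ [c, d] for some c, d with 0 < c ≤ d < 1. Given x₀ ∈ C, define iteratively y_n = α_n x_n + (1 − α_n) T P_C(x_n − λ_n A x_n) and x_{n+1} = T P_C(y_n − λ_n A y_n). Then the sequence {x_n} converges weakly to a point p ∈ F, and p = lim_{n→∞} P_F x_n (the strong limit of the projections of x_n onto F). -/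
set_option maxHeartbeats 8000000
open scoped RealInnerProductSpace
open Filter Topology

section helpers
variable {H : Type*} [NormedAddCommGroup H] [InnerProductSpace ℝ H]

lemma my_proj_char {K : Set H} (hK : Convex ℝ K) {P : H → H}
    (hP : ∀ u : H, P u ∈ K ∧ ∀ w ∈ K, ‖u - P u‖ ≤ ‖u - w‖) :
    ∀ u : H, ∀ w ∈ K, ⟪u - P u, w - P u⟫ ≤ 0 := by
  intro u w hw
  have hPm := (hP u).1
  haveI : Nonempty K := ⟨⟨P u, hPm⟩⟩
  have heq : ‖u - P u‖ = ⨅ w : K, ‖u - (w : H)‖ := by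
    apply le_antisymm
    · exact le_ciInf fun w => (hP u).2 w w.2
    · exact ciInf_le ⟨0, by rintro r ⟨w, rfl⟩; positivity⟩ (⟨P u, hPm⟩ : K)
  exact (norm_eq_iInf_iff_real_inner_le_zero hK hPm).1 heq w hw

lemma my_combo (θ : ℝ) (a b : H) :
    ‖θ • a + (1 - θ) • b‖ ^ 2
      = θ * ‖a‖ ^ 2 + (1 - θ) * ‖b‖ ^ 2 - θ * (1 - θ) * ‖a - b‖ ^ 2 := by
  rw [← real_inner_self_eq_norm_sq, ← real_inner_self_eq_norm_sq,
    ← real_inner_self_eq_norm_sq, ← real_inner_self_eq_norm_sq]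
  simp only [inner_add_left, inner_add_right, inner_sub_left, inner_sub_right,
    real_inner_smul_left, real_inner_smul_right, real_inner_comm a b]
  ring

lemma my_sq_tendsto_zero {g : ℕ → ℝ} {l : Filter ℕ}
    (h : Tendsto (fun n => (g n) ^ 2) l (𝓝 0)) (hg : ∀ n, 0 ≤ g n) :
    Tendsto g l (𝓝 0) := by
  have h2 : Tendsto (fun n => Real.sqrt ((g n) ^ 2)) l (𝓝 (Real.sqrt 0)) :=
    (Real.continuous_sqrt.tendsto 0).comp h
  rw [Real.sqrt_zero] at h2
  convert h2 using 2 with n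
  rw [Real.sqrt_sq (hg n)]

end helpers

theorem stmt_0
    {H : Type*} [NormedAddCommGroup H] [InnerProductSpace ℝ H] [CompleteSpace H]
    (C : Set H) (hCne : C.Nonempty) (hCcl : IsClosed C) (hCcv : Convex ℝ C)
    (PC : H → H) (hPC : ∀ u : H, PC u ∈ C ∧ ∀ w ∈ C, ‖u - PC u‖ ≤ ‖u - w‖)
    (α : ℝ) (hα : 0 < α) (A : H → H)
    (hA : ∀ x ∈ C, ∀ y ∈ C, ⟪A x - A y, x - y⟫ ≥ α * ‖A x - A y‖ ^ 2)
    (T : H → H) (hTmaps : Set.MapsTo T C C)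
    (hT : ∀ x ∈ C, ∀ y ∈ C, ‖T x - T y‖ ≤ ‖x - y‖)
    (F : Set H)
    (hF : F = {x ∈ C | T x = x} ∩ {x ∈ C | ∀ y ∈ C, ⟪A x, y - x⟫ ≥ 0})
    (hFne : F.Nonempty)
    (a b c d : ℝ) (ha : 0 < a) (hab : a ≤ b) (hb : b < 2 * α)
    (hc : 0 < c) (hcd : c ≤ d) (hd : d < 1)
    (lam : ℕ → ℝ) (hlam : ∀ n, lam n ∈ Set.Icc a b)
    (alp : ℕ → ℝ) (halp : ∀ n, alp n ∈ Set.Icc c d)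
    (x y : ℕ → H) (hx0 : x 0 ∈ C)
    (hy : ∀ n, y n = alp n • x n + (1 - alp n) • T (PC (x n - lam n • A (x n))))
    (hx : ∀ n, x (n + 1) = T (PC (y n - lam n • A (y n))))
    (PF : H → H) (hPF : ∀ u : H, PF u ∈ F ∧ ∀ w ∈ F, ‖u - PF u‖ ≤ ‖u - w‖) :
    ∃ p ∈ F,
      (∀ u : H, Tendsto (fun n => ⟪x n, u⟫) atTop (𝓝 ⟪p, u⟫)) ∧
      Tendsto (fun n => PF (x n)) atTop (𝓝 p) := by
  obtain ⟨u0, hu0F⟩ := hFne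
  -- basic F facts
  have hFmem : ∀ u ∈ F, u ∈ C ∧ T u = u ∧ ∀ v ∈ C, ⟪A u, v - u⟫ ≥ 0 := by
    intro u hu; rw [hF] at hu; exact ⟨hu.1.1, hu.1.2, hu.2.2⟩
  have hFof : ∀ u, u ∈ C → T u = u → (∀ v ∈ C, ⟪A u, v - u⟫ ≥ 0) → u ∈ F := by
    intro u h1 h2 h3; rw [hF]; exact ⟨⟨h1, h2⟩, ⟨h1, h3⟩⟩
  -- projection facts
  have hPCchar := my_proj_char hCcv hPC
  have hPCfirm : ∀ u v : H, ‖PC u - PC v‖ ^ 2 ≤ ⟪u - v, PC u - PC v⟫ := by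
    intro u v
    have h1 := hPCchar u (PC v) (hPC v).1
    have h2 := hPCchar v (PC u) (hPC u).1
    have e : ⟪PC u - PC v, PC u - PC v⟫ - ⟪u - v, PC u - PC v⟫
        = ⟪v - PC v, PC u - PC v⟫ - ⟪u - PC u, PC u - PC v⟫ := by
      rw [← inner_sub_left, ← inner_sub_left]; congr 1; abel
    have e2 : ⟪u - PC u, PC u - PC v⟫ = -⟪u - PC u, PC v - PC u⟫ := by
      rw [← inner_neg_right]; congr 1; abel
    rw [← real_inner_self_eq_norm_sq]; linarith [e, e2.symm ▸ e]
  have hPCne : ∀ u v : H, ‖PC u - PC v‖ ≤ ‖u - v‖ := by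
    intro u v
    have hf := hPCfirm u v
    have hcs := real_inner_le_norm (u - v) (PC u - PC v)
    rcases eq_or_lt_of_le (norm_nonneg (PC u - PC v)) with h0 | h0
    · rw [← h0]; exact norm_nonneg _
    · nlinarith
  have hPCof : ∀ u v : H, v ∈ C → (∀ w ∈ C, ⟪u - v, w - v⟫ ≤ 0) → PC u = v := by
    intro u v hv hchar
    have h1 := hPCchar u v hv
    have h2 := hchar (PC u) (hPC u).1
    have e : ⟪PC u - v, PC u - v⟫ - ⟪u - v, PC u - v⟫ = -⟪u - PC u, PC u - v⟫ := by
      rw [← inner_neg_left, ← inner_sub_left]; congr 1; abel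
    have e2 : ⟪u - PC u, PC u - v⟫ = -⟪u - PC u, v - PC u⟫ := by
      rw [← inner_neg_right]; congr 1; abel
    have key : ⟪PC u - v, PC u - v⟫ ≤ 0 := by rw [e2] at e; linarith
    have : ‖PC u - v‖ ^ 2 ≤ 0 := by rwa [real_inner_self_eq_norm_sq] at key
    have hn : ‖PC u - v‖ = 0 := by nlinarith [norm_nonneg (PC u - v)]
    exact sub_eq_zero.mp (norm_eq_zero.mp hn)
  -- A facts
  have hAmono : ∀ u ∈ C, ∀ v ∈ C, (0:ℝ) ≤ ⟪A u - A v, u - v⟫ := by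
    intro u hu v hv
    have := hA u hu v hv
    nlinarith [sq_nonneg ‖A u - A v‖]
  have hALip : ∀ u ∈ C, ∀ v ∈ C, α * ‖A u - A v‖ ≤ ‖u - v‖ := by
    intro u hu v hv
    have h1 := hA u hu v hv
    have h2 := real_inner_le_norm (A u - A v) (u - v)
    rcases eq_or_lt_of_le (norm_nonneg (A u - A v)) with h0 | h0
    · rw [← h0]; simpa using norm_nonneg (u - v)
    · nlinarith
  -- lam facts
  have hlama : ∀ n, a ≤ lam n := fun n => (hlam n).1
  have hlamb : ∀ n, lam n ≤ b := fun n => (hlam n).2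
  have hlampos : ∀ n, 0 < lam n := fun n => lt_of_lt_of_le ha (hlama n)
  have halpc : ∀ n, c ≤ alp n := fun n => (halp n).1
  have halpd : ∀ n, alp n ≤ d := fun n => (halp n).2
  -- auxiliary sequence
  obtain ⟨tn, htn⟩ : ∃ tn : ℕ → H, ∀ n, tn n = PC (x n - lam n • A (x n)) :=
    ⟨_, fun n => rfl⟩
  have hyn : ∀ n, y n = alp n • x n + (1 - alp n) • T (tn n) := by
    intro n; rw [hy n, htn n]
  -- memberships
  have hxC : ∀ n, x n ∈ C := by
    intro n
    induction n with
    | zero => exact hx0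
    | succ n ih => rw [hx n]; exact hTmaps (hPC _).1
  have htC : ∀ n, tn n ∈ C := fun n => by rw [htn n]; exact (hPC _).1
  have hTtC : ∀ n, T (tn n) ∈ C := fun n => hTmaps (htC n)
  have hyC : ∀ n, y n ∈ C := by
    intro n
    rw [hyn n]
    exact hCcv (hxC n) (hTtC n) (le_of_lt (lt_of_lt_of_le hc (halpc n)))
      (by linarith [halpd n]) (by ring)
  -- fixed points project to themselves
  have hFproj : ∀ u ∈ F, ∀ l : ℝ, 0 ≤ l → PC (u - l • A u) = u := by
    intro u hu l hl
    obtain ⟨huC, _, huVI⟩ := hFmem u hu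
    apply hPCof _ _ huC
    intro w hw
    have : u - l • A u - u = -(l • A u) := by abel
    rw [this, inner_neg_left, real_inner_smul_left, neg_nonpos]
    exact mul_nonneg hl (huVI w hw)
  -- key inequality
  have key1 : ∀ u ∈ F, ∀ n, ∀ z ∈ C,
      ‖PC (z - lam n • A z) - u‖ ^ 2
        ≤ ‖z - u‖ ^ 2 - lam n * (2 * α - lam n) * ‖A z - A u‖ ^ 2 := by
    intro u hu n z hz
    obtain ⟨huC, _, _⟩ := hFmem u hu
    have h2 : ‖PC (z - lam n • A z) - u‖ ≤ ‖(z - lam n • A z) - (u - lam n • A u)‖ := by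
      conv_lhs => rw [← hFproj u hu (lam n) (le_of_lt (hlampos n))]
      exact hPCne _ _
    have h3 : (z - lam n • A z) - (u - lam n • A u) = (z - u) - lam n • (A z - A u) := by
      rw [smul_sub]; abel
    have h2' : ‖PC (z - lam n • A z) - u‖ ^ 2 ≤ ‖(z - u) - lam n • (A z - A u)‖ ^ 2 := by
      rw [← h3]; exact pow_le_pow_left₀ (norm_nonneg _) h2 2
    have h4 : ‖(z - u) - lam n • (A z - A u)‖ ^ 2
        = ‖z - u‖ ^ 2 - 2 * (lam n * ⟪z - u, A z - A u⟫) + (lam n) ^ 2 * ‖A z - A u‖ ^ 2 := by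
      rw [norm_sub_sq_real, real_inner_smul_right, norm_smul, Real.norm_eq_abs, mul_pow, sq_abs]
    have h5 : α * ‖A z - A u‖ ^ 2 ≤ ⟪z - u, A z - A u⟫ := by
      rw [real_inner_comm]; exact hA z hz u huC
    nlinarith [mul_le_mul_of_nonneg_left h5 (le_of_lt (mul_pos two_pos (hlampos n))),
      sq_nonneg ‖A z - A u‖, hlampos n, hlama n, hlamb n]
  have key1b : ∀ u ∈ F, ∀ n, ∀ z ∈ C, ‖PC (z - lam n • A z) - u‖ ≤ ‖z - u‖ := by
    intro u hu n z hz
    have h1 := key1 u hu n z hz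
    have h2 : 0 ≤ lam n * (2 * α - lam n) * ‖A z - A u‖ ^ 2 := by
      apply mul_nonneg (mul_nonneg (le_of_lt (hlampos n)) (by linarith [hlamb n])) (sq_nonneg _)
    nlinarith [norm_nonneg (PC (z - lam n • A z) - u), norm_nonneg (z - u)]
  -- Fejér monotonicity
  have hydecomp : ∀ (u : H) n, y n - u = alp n • (x n - u) + (1 - alp n) • (T (tn n) - u) := by
    intro u n
    rw [hyn n]; module
  have hfej1 : ∀ u ∈ F, ∀ n, ‖y n - u‖ ≤ ‖x n - u‖ := by
    intro u hu n
    obtain ⟨huC, huT, _⟩ := hFmem u hu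
    have hTt : ‖T (tn n) - u‖ ≤ ‖x n - u‖ := by
      calc ‖T (tn n) - u‖ = ‖T (tn n) - T u‖ := by rw [huT]
        _ ≤ ‖tn n - u‖ := hT _ (htC n) _ huC
        _ ≤ ‖x n - u‖ := by rw [htn n]; exact key1b u hu n (x n) (hxC n)
    rw [hydecomp u n]
    calc ‖alp n • (x n - u) + (1 - alp n) • (T (tn n) - u)‖
        ≤ ‖alp n • (x n - u)‖ + ‖(1 - alp n) • (T (tn n) - u)‖ := norm_add_le _ _
      _ = alp n * ‖x n - u‖ + (1 - alp n) * ‖T (tn n) - u‖ := by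
          rw [norm_smul, norm_smul, Real.norm_eq_abs, Real.norm_eq_abs,
            abs_of_pos (lt_of_lt_of_le hc (halpc n)), abs_of_pos (by linarith [halpd n])]
      _ ≤ ‖x n - u‖ := by nlinarith [halpc n, halpd n, norm_nonneg (x n - u), hTt]
  have hfej2 : ∀ u ∈ F, ∀ n, ‖x (n + 1) - u‖ ≤ ‖y n - u‖ := by
    intro u hu n
    obtain ⟨huC, huT, _⟩ := hFmem u hu
    rw [hx n]
    calc ‖T (PC (y n - lam n • A (y n))) - u‖
        = ‖T (PC (y n - lam n • A (y n))) - T u‖ := by rw [huT]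
      _ ≤ ‖PC (y n - lam n • A (y n)) - u‖ := hT _ (hPC _).1 _ huC
      _ ≤ ‖y n - u‖ := key1b u hu n (y n) (hyC n)
  have hanti : ∀ u ∈ F, Antitone fun n => ‖x n - u‖ := by
    intro u hu
    apply antitone_nat_of_succ_le
    intro n
    exact le_trans (hfej2 u hu n) (hfej1 u hu n)
  have hlim : ∀ u ∈ F, ∃ r : ℝ, 0 ≤ r ∧ Tendsto (fun n => ‖x n - u‖) atTop (𝓝 r) := by
    intro u hu
    have hbdd : BddBelow (Set.range fun n => ‖x n - u‖) := ⟨0, by rintro r ⟨n, rfl⟩; positivity⟩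
    refine ⟨⨅ n, ‖x n - u‖, le_ciInf fun n => norm_nonneg _, ?_⟩
    exact tendsto_atTop_ciInf (hanti u hu) hbdd
  have hD : ∀ u ∈ F, Tendsto (fun n => ‖x n - u‖ ^ 2 - ‖x (n + 1) - u‖ ^ 2) atTop (𝓝 0) := by
    intro u hu
    obtain ⟨r, -, hr⟩ := hlim u hu
    have h1 : Tendsto (fun n => ‖x n - u‖ ^ 2) atTop (𝓝 (r ^ 2)) := hr.pow 2
    have h2 : Tendsto (fun n => ‖x (n + 1) - u‖ ^ 2) atTop (𝓝 (r ^ 2)) :=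
      h1.comp (tendsto_add_atTop_nat 1)
    simpa using h1.sub h2
  -- bounds
  obtain ⟨hu0C, hu0T, hu0VI⟩ := hFmem u0 hu0F
  set R : ℝ := ‖x 0 - u0‖ with hR
  set M : ℝ := R + ‖u0‖ with hM
  have hxbd : ∀ n, ‖x n - u0‖ ≤ R := fun n => hanti u0 hu0F (Nat.zero_le n)
  have htbd : ∀ n, ‖tn n - u0‖ ≤ R := by
    intro n
    rw [htn n]
    exact le_trans (key1b u0 hu0F n (x n) (hxC n)) (hxbd n)
  have hMx : ∀ n, ‖x n‖ ≤ M := by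
    intro n
    calc ‖x n‖ = ‖(x n - u0) + u0‖ := by congr 1; abel
      _ ≤ ‖x n - u0‖ + ‖u0‖ := norm_add_le _ _
      _ ≤ M := by rw [hM]; linarith [hxbd n]
  have hM0 : 0 ≤ M := le_trans (norm_nonneg (x 0)) (hMx 0)
  -- squared convex-combination identity
  have hysq : ∀ n, ‖y n - u0‖ ^ 2
      = alp n * ‖x n - u0‖ ^ 2 + (1 - alp n) * ‖T (tn n) - u0‖ ^ 2
        - alp n * (1 - alp n) * ‖x n - T (tn n)‖ ^ 2 := by
    intro n
    have h := my_combo (alp n) (x n - u0) (T (tn n) - u0)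
    rw [show (x n - u0) - (T (tn n) - u0) = x n - T (tn n) by abel] at h
    rw [← hydecomp u0 n] at h
    exact h
  have hTtsq : ∀ n, ‖T (tn n) - u0‖ ≤ ‖tn n - u0‖ := by
    intro n
    calc ‖T (tn n) - u0‖ = ‖T (tn n) - T u0‖ := by rw [hu0T]
      _ ≤ ‖tn n - u0‖ := hT _ (htC n) _ hu0C
  -- vanishing of ‖A x_n - A u0‖
  have hAx0 : Tendsto (fun n => ‖A (x n) - A u0‖) atTop (𝓝 0) := by
    have hk : (0:ℝ) < (1 - d) * (a * (2 * α - b)) := mul_pos (by linarith) (mul_pos ha (by linarith))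
    have hineq1 : ∀ n, (1 - d) * (a * (2 * α - b)) * ‖A (x n) - A u0‖ ^ 2
        ≤ ‖x n - u0‖ ^ 2 - ‖x (n + 1) - u0‖ ^ 2 := by
      intro n
      have e1 : ‖x (n + 1) - u0‖ ^ 2 ≤ ‖y n - u0‖ ^ 2 :=
        pow_le_pow_left₀ (norm_nonneg _) (hfej2 u0 hu0F n) 2
      have e2 := hysq n
      have e3 : ‖T (tn n) - u0‖ ^ 2 ≤ ‖tn n - u0‖ ^ 2 :=
        pow_le_pow_left₀ (norm_nonneg _) (hTtsq n) 2
      have e4 : ‖tn n - u0‖ ^ 2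
          ≤ ‖x n - u0‖ ^ 2 - lam n * (2 * α - lam n) * ‖A (x n) - A u0‖ ^ 2 := by
        rw [htn n]; exact key1 u0 hu0F n (x n) (hxC n)
      have e5 : a * (2 * α - b) ≤ lam n * (2 * α - lam n) := by
        nlinarith [hlama n, hlamb n]
      have e6 : (1 - d) * (a * (2 * α - b)) * ‖A (x n) - A u0‖ ^ 2
          ≤ (1 - alp n) * (lam n * (2 * α - lam n)) * ‖A (x n) - A u0‖ ^ 2 := by
        apply mul_le_mul_of_nonneg_right _ (sq_nonneg _)
        apply mul_le_mul (by linarith [halpd n]) e5 (by nlinarith) (by linarith [halpd n])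
      have e7 : (1 - alp n) * ‖T (tn n) - u0‖ ^ 2
          ≤ (1 - alp n) * (‖x n - u0‖ ^ 2 - lam n * (2 * α - lam n) * ‖A (x n) - A u0‖ ^ 2) :=
        mul_le_mul_of_nonneg_left (e3.trans e4) (by linarith [halpd n])
      have e8 : 0 ≤ alp n * (1 - alp n) * ‖x n - T (tn n)‖ ^ 2 := by
        apply mul_nonneg (mul_nonneg (by linarith [halpc n]) (by linarith [halpd n])) (sq_nonneg _)
      nlinarith [e1, e2, e6, e7, e8]
    apply my_sq_tendsto_zero _ (fun n => norm_nonneg _)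
    apply squeeze_zero (fun n => sq_nonneg _)
      (g := fun n => ((1 - d) * (a * (2 * α - b)))⁻¹ * (‖x n - u0‖ ^ 2 - ‖x (n + 1) - u0‖ ^ 2))
    · intro n
      rw [inv_mul_eq_div, le_div_iff₀' hk]
      exact hineq1 n
    · simpa using (hD u0 hu0F).const_mul ((1 - d) * (a * (2 * α - b)))⁻¹
  -- vanishing of ‖x_n - T t_n‖
  have hxTt : Tendsto (fun n => ‖x n - T (tn n)‖) atTop (𝓝 0) := by
    have hk : (0:ℝ) < c * (1 - d) := by nlinarith
    have hineq3 : ∀ n, c * (1 - d) * ‖x n - T (tn n)‖ ^ 2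
        ≤ ‖x n - u0‖ ^ 2 - ‖x (n + 1) - u0‖ ^ 2 := by
      intro n
      have e1 : ‖x (n + 1) - u0‖ ^ 2 ≤ ‖y n - u0‖ ^ 2 :=
        pow_le_pow_left₀ (norm_nonneg _) (hfej2 u0 hu0F n) 2
      have e2 := hysq n
      have e9 : ‖T (tn n) - u0‖ ^ 2 ≤ ‖x n - u0‖ ^ 2 := by
        apply pow_le_pow_left₀ (norm_nonneg _) _ 2
        refine (hTtsq n).trans ?_
        rw [htn n]; exact key1b u0 hu0F n (x n) (hxC n)
      have e10 : c * (1 - d) * ‖x n - T (tn n)‖ ^ 2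
          ≤ alp n * (1 - alp n) * ‖x n - T (tn n)‖ ^ 2 := by
        apply mul_le_mul_of_nonneg_right _ (sq_nonneg _)
        apply mul_le_mul (halpc n) (by linarith [halpd n]) (by linarith) (by linarith [halpc n, hc])
      have e11 : (1 - alp n) * ‖T (tn n) - u0‖ ^ 2 ≤ (1 - alp n) * ‖x n - u0‖ ^ 2 :=
        mul_le_mul_of_nonneg_left e9 (by linarith [halpd n])
      nlinarith [e1, e2, e10, e11]
    apply my_sq_tendsto_zero _ (fun n => norm_nonneg _)
    apply squeeze_zero (fun n => sq_nonneg _)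
      (g := fun n => (c * (1 - d))⁻¹ * (‖x n - u0‖ ^ 2 - ‖x (n + 1) - u0‖ ^ 2))
    · intro n
      rw [inv_mul_eq_div, le_div_iff₀' hk]
      exact hineq3 n
    · simpa using (hD u0 hu0F).const_mul (c * (1 - d))⁻¹
  -- vanishing of ‖x_n - t_n‖
  have hxt : Tendsto (fun n => ‖x n - tn n‖) atTop (𝓝 0) := by
    have key2 : ∀ n, ‖tn n - u0‖ ^ 2
        ≤ ‖x n - u0‖ ^ 2 - ‖x n - tn n‖ ^ 2
          + 2 * lam n * (‖A (x n) - A u0‖ * ‖tn n - u0‖) := by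
      intro n
      have hfirm : ‖tn n - u0‖ ^ 2
          ≤ ⟪(x n - lam n • A (x n)) - (u0 - lam n • A u0), tn n - u0⟫ := by
        have h := hPCfirm (x n - lam n • A (x n)) (u0 - lam n • A u0)
        rw [hFproj u0 hu0F (lam n) (le_of_lt (hlampos n))] at h
        rw [htn n]
        exact h
      have hsplit : ⟪(x n - lam n • A (x n)) - (u0 - lam n • A u0), tn n - u0⟫
          = ⟪x n - u0, tn n - u0⟫ - lam n * ⟪A (x n) - A u0, tn n - u0⟫ := by
        rw [show (x n - lam n • A (x n)) - (u0 - lam n • A u0)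
            = (x n - u0) - lam n • (A (x n) - A u0) by rw [smul_sub]; abel,
          inner_sub_left, real_inner_smul_left]
      have hpolar : 2 * ⟪x n - u0, tn n - u0⟫
          = ‖x n - u0‖ ^ 2 + ‖tn n - u0‖ ^ 2 - ‖x n - tn n‖ ^ 2 := by
        have h := @norm_sub_sq_real H _ _ (x n - u0) (tn n - u0)
        rw [show (x n - u0) - (tn n - u0) = x n - tn n by abel] at h
        linarith
      have hcs : -⟪A (x n) - A u0, tn n - u0⟫ ≤ ‖A (x n) - A u0‖ * ‖tn n - u0‖ := by
        have h := abs_real_inner_le_norm (A (x n) - A u0) (tn n - u0)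
        linarith [(abs_le.mp h).1]
      nlinarith [hfirm, hsplit, hpolar,
        mul_le_mul_of_nonneg_left hcs (le_of_lt (hlampos n))]
    have hk : (0:ℝ) < 1 - d := by linarith
    have hineq2 : ∀ n, (1 - d) * ‖x n - tn n‖ ^ 2
        ≤ (‖x n - u0‖ ^ 2 - ‖x (n + 1) - u0‖ ^ 2) + 2 * b * R * ‖A (x n) - A u0‖ := by
      intro n
      have e1 : ‖x (n + 1) - u0‖ ^ 2 ≤ ‖y n - u0‖ ^ 2 :=
        pow_le_pow_left₀ (norm_nonneg _) (hfej2 u0 hu0F n) 2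
      have e2 := hysq n
      have e3 : (1 - alp n) * ‖T (tn n) - u0‖ ^ 2 ≤ (1 - alp n) * ‖tn n - u0‖ ^ 2 :=
        mul_le_mul_of_nonneg_left (pow_le_pow_left₀ (norm_nonneg _) (hTtsq n) 2)
          (by linarith [halpd n])
      have e4 : (1 - alp n) * ‖tn n - u0‖ ^ 2
          ≤ (1 - alp n) * (‖x n - u0‖ ^ 2 - ‖x n - tn n‖ ^ 2
            + 2 * lam n * (‖A (x n) - A u0‖ * ‖tn n - u0‖)) :=
        mul_le_mul_of_nonneg_left (key2 n) (by linarith [halpd n])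
      have h10 : (1 - alp n) * (2 * lam n * (‖A (x n) - A u0‖ * ‖tn n - u0‖))
          ≤ 2 * b * R * ‖A (x n) - A u0‖ := by
        have hb0 : (0:ℝ) < b := lt_of_lt_of_le ha hab
        have hin : ‖A (x n) - A u0‖ * ‖tn n - u0‖ ≤ ‖A (x n) - A u0‖ * R :=
          mul_le_mul_of_nonneg_left (htbd n) (norm_nonneg _)
        calc (1 - alp n) * (2 * lam n * (‖A (x n) - A u0‖ * ‖tn n - u0‖))
            ≤ 1 * (2 * b * (‖A (x n) - A u0‖ * R)) := by
              apply mul_le_mul (by linarith [halpc n, hc]) _ _ one_pos.le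
              · apply mul_le_mul (by linarith [hlamb n]) hin
                  (mul_nonneg (norm_nonneg _) (norm_nonneg _)) (by linarith)
              · exact mul_nonneg (by linarith [hlampos n])
                  (mul_nonneg (norm_nonneg _) (norm_nonneg _))
          _ = 2 * b * R * ‖A (x n) - A u0‖ := by ring
      have e8 : 0 ≤ alp n * (1 - alp n) * ‖x n - T (tn n)‖ ^ 2 := by
        apply mul_nonneg (mul_nonneg (by linarith [halpc n]) (by linarith [halpd n])) (sq_nonneg _)
      have e12 : (1 - d) * ‖x n - tn n‖ ^ 2 ≤ (1 - alp n) * ‖x n - tn n‖ ^ 2 :=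
        mul_le_mul_of_nonneg_right (by linarith [halpd n]) (sq_nonneg _)
      nlinarith [e1, e2, e3, e4, h10, e8, e12]
    apply my_sq_tendsto_zero _ (fun n => norm_nonneg _)
    apply squeeze_zero (fun n => sq_nonneg _)
      (g := fun n => (1 - d)⁻¹ * ((‖x n - u0‖ ^ 2 - ‖x (n + 1) - u0‖ ^ 2)
        + 2 * b * R * ‖A (x n) - A u0‖))
    · intro n
      rw [inv_mul_eq_div, le_div_iff₀' hk]
      exact hineq2 n
    · have h1 : Tendsto (fun n => (‖x n - u0‖ ^ 2 - ‖x (n + 1) - u0‖ ^ 2)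
          + 2 * b * R * ‖A (x n) - A u0‖) atTop (𝓝 (0 + 2 * b * R * 0)) :=
        (hD u0 hu0F).add (hAx0.const_mul (2 * b * R))
      simpa using h1.const_mul (1 - d)⁻¹
  -- vanishing of ‖x_n - T x_n‖
  have hxTx : Tendsto (fun n => ‖x n - T (x n)‖) atTop (𝓝 0) := by
    apply squeeze_zero (fun n => norm_nonneg _)
      (g := fun n => ‖x n - T (tn n)‖ + ‖x n - tn n‖)
    · intro n
      calc ‖x n - T (x n)‖ ≤ ‖x n - T (tn n)‖ + ‖T (tn n) - T (x n)‖ := by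
            rw [show x n - T (x n) = (x n - T (tn n)) + (T (tn n) - T (x n)) by abel]
            exact norm_add_le _ _
        _ ≤ ‖x n - T (tn n)‖ + ‖x n - tn n‖ := by
            have := hT (tn n) (htC n) (x n) (hxC n)
            rw [norm_sub_rev (tn n) (x n)] at this
            linarith
    · simpa using hxTt.add hxt
  -- Minty lemmas
  have hMintyRev : ∀ p ∈ C, (∀ v ∈ C, (0:ℝ) ≤ ⟪A v, v - p⟫) → ∀ v ∈ C, (0:ℝ) ≤ ⟪A p, v - p⟫ := by
    intro p hp hpv v hv
    have hbd : ∀ k : ℕ, -(α⁻¹ * ‖v - p‖ ^ 2) * (1 / ((k:ℝ) + 1)) ≤ ⟪A p, v - p⟫ := by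
      intro k
      set τ : ℝ := 1 / ((k:ℝ) + 1) with hτ
      have hτpos : 0 < τ := by positivity
      have hτle : τ ≤ 1 := by
        rw [hτ, div_le_one (by positivity)]
        simp
      set vk : H := p + τ • (v - p) with hvk
      have hvkC : vk ∈ C := by
        have hco : (1 - τ) • p + τ • v ∈ C :=
          hCcv hp hv (by linarith) (le_of_lt hτpos) (by ring)
        have : vk = (1 - τ) • p + τ • v := by rw [hvk]; module
        rwa [this]
      have hvkp : vk - p = τ • (v - p) := by rw [hvk]; abel
      have h1 : 0 ≤ ⟪A vk, vk - p⟫ := hpv vk hvkC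
      rw [hvkp, real_inner_smul_right] at h1
      have h1' : 0 ≤ ⟪A vk, v - p⟫ := by nlinarith [h1, hτpos]
      have h2 : α * ‖A vk - A p‖ ≤ τ * ‖v - p‖ := by
        have := hALip vk hvkC p hp
        rwa [show vk - p = τ • (v - p) from hvkp, norm_smul, Real.norm_eq_abs,
          abs_of_pos hτpos] at this
      have h3 : ⟪A p, v - p⟫ = ⟪A vk, v - p⟫ - ⟪A vk - A p, v - p⟫ := by
        simp only [inner_sub_left]; ring
      have h4 : ⟪A vk - A p, v - p⟫ ≤ ‖A vk - A p‖ * ‖v - p‖ := real_inner_le_norm _ _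
      have h5 : ‖A vk - A p‖ * ‖v - p‖ ≤ (α⁻¹ * (τ * ‖v - p‖)) * ‖v - p‖ := by
        apply mul_le_mul_of_nonneg_right _ (norm_nonneg _)
        rw [← div_eq_inv_mul, le_div_iff₀ hα]
        linarith
      have : ⟪A p, v - p⟫ ≥ 0 - (α⁻¹ * (τ * ‖v - p‖)) * ‖v - p‖ := by
        rw [h3]; linarith
      calc -(α⁻¹ * ‖v - p‖ ^ 2) * τ = 0 - (α⁻¹ * (τ * ‖v - p‖)) * ‖v - p‖ := by ring
        _ ≤ ⟪A p, v - p⟫ := this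
    have hten : Tendsto (fun k : ℕ => -(α⁻¹ * ‖v - p‖ ^ 2) * (1 / ((k:ℝ) + 1))) atTop (𝓝 0) := by
      simpa using tendsto_one_div_add_atTop_nhds_zero_nat.const_mul (-(α⁻¹ * ‖v - p‖ ^ 2))
    exact le_of_tendsto' hten hbd
  have hMintyFwd : ∀ u ∈ F, ∀ v ∈ C, (0:ℝ) ≤ ⟪A v, v - u⟫ := by
    intro u hu v hv
    obtain ⟨huC, -, hVI⟩ := hFmem u hu
    have h1 := hAmono v hv u huC
    have h2 := hVI v hv
    have h3 : ⟪A v, v - u⟫ = ⟪A v - A u, v - u⟫ + ⟪A u, v - u⟫ := by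
      simp only [inner_sub_left]; ring
    linarith
  -- the ultrafilter weak-limit construction
  have key : ∀ V : Ultrafilter ℕ, (V : Filter ℕ) ≤ atTop →
      ∃ w, w ∈ F ∧ ∀ u : H, Tendsto (fun n => ⟪x n, u⟫) V (𝓝 ⟪w, u⟫) := by
    intro V hV
    have hUL : ∀ (g : ℕ → ℝ) (K : ℝ), (∀ n, |g n| ≤ K) → ∃ L, Tendsto g (V : Filter ℕ) (𝓝 L) := by
      intro g K hg
      have hle : (Ultrafilter.map g V : Filter ℝ) ≤ 𝓟 (Set.Icc (-K) K) := by
        rw [Ultrafilter.coe_map, le_principal_iff]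
        exact Filter.mem_map.mpr (Filter.univ_mem' fun n => Set.mem_Icc.mpr (abs_le.mp (hg n)))
      obtain ⟨L, -, hL⟩ := (isCompact_Icc (a := -K) (b := K)).ultrafilter_le_nhds
        (Ultrafilter.map g V) hle
      rw [Ultrafilter.coe_map] at hL
      exact ⟨L, hL⟩
    have hLex : ∀ u : H, ∃ L, Tendsto (fun n => ⟪x n, u⟫) (V : Filter ℕ) (𝓝 L) := by
      intro u
      apply hUL _ (M * ‖u‖)
      intro n
      calc |⟪x n, u⟫| ≤ ‖x n‖ * ‖u‖ := abs_real_inner_le_norm _ _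
        _ ≤ M * ‖u‖ := mul_le_mul_of_nonneg_right (hMx n) (norm_nonneg _)
    choose L hL using hLex
    have hadd : ∀ u v : H, L (u + v) = L u + L v := fun u v =>
      tendsto_nhds_unique (hL (u + v)) (by simpa [inner_add_right] using (hL u).add (hL v))
    have hsmul : ∀ (r : ℝ) (u : H), L (r • u) = r * L u := fun r u =>
      tendsto_nhds_unique (hL (r • u)) (by simpa [real_inner_smul_right] using (hL u).const_mul r)
    have hbdL : ∀ u, ‖L u‖ ≤ M * ‖u‖ := by
      intro u
      rw [Real.norm_eq_abs]
      apply le_of_tendsto (hL u).abs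
      apply Filter.Eventually.of_forall
      intro n
      calc |⟪x n, u⟫| ≤ ‖x n‖ * ‖u‖ := abs_real_inner_le_norm _ _
        _ ≤ M * ‖u‖ := mul_le_mul_of_nonneg_right (hMx n) (norm_nonneg _)
    set φ : H →ₗ[ℝ] ℝ :=
      { toFun := L, map_add' := hadd, map_smul' := hsmul } with hφ
    set φc : H →L[ℝ] ℝ := LinearMap.mkContinuous φ M hbdL with hφc
    set w := (InnerProductSpace.toDual ℝ H).symm φc with hwdef
    have hw : ∀ u, ⟪w, u⟫ = L u := by
      intro u
      rw [hwdef, InnerProductSpace.toDual_symm_apply]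
      rfl
    have hweak : ∀ u, Tendsto (fun n => ⟪x n, u⟫) (V : Filter ℕ) (𝓝 ⟪w, u⟫) := fun u =>
      (hw u) ▸ hL u
    -- w ∈ C by separation
    have hwC : w ∈ C := by
      by_contra hwC
      obtain ⟨f, s', hfs, hfb⟩ := geometric_hahn_banach_point_closed hCcv hCcl hwC
      set yf := (InnerProductSpace.toDual ℝ H).symm f with hyfdef
      have hyfv : ∀ v : H, ⟪yf, v⟫ = f v := by
        intro v; rw [hyfdef, InnerProductSpace.toDual_symm_apply]
      have h1 : Tendsto (fun n => ⟪x n, yf⟫) (V : Filter ℕ) (𝓝 ⟪w, yf⟫) := hweak yf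
      have h2 : s' ≤ ⟪w, yf⟫ := by
        apply ge_of_tendsto h1
        apply Filter.Eventually.of_forall
        intro n
        rw [real_inner_comm, hyfv]
        exact le_of_lt (hfb (x n) (hxC n))
      rw [real_inner_comm, hyfv] at h2
      linarith
    have Vle : ∀ {g : ℕ → ℝ} {l : ℝ}, Tendsto g atTop (𝓝 l) → Tendsto g (V : Filter ℕ) (𝓝 l) :=
      fun h => h.mono_left hV
    -- T w = w
    obtain ⟨Lw, hLw⟩ := hUL (fun n => ‖x n - w‖) (M + ‖w‖) (fun n => by
      rw [abs_of_nonneg (norm_nonneg _)]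
      calc ‖x n - w‖ ≤ ‖x n‖ + ‖w‖ := norm_sub_le _ _
        _ ≤ M + ‖w‖ := by linarith [hMx n])
    have hwT : T w = w := by
      have hcross : Tendsto (fun n => ⟪x n - w, w - T w⟫) (V : Filter ℕ) (𝓝 0) := by
        have h2 : Tendsto (fun n => ⟪x n, w - T w⟫ - ⟪w, w - T w⟫) (V : Filter ℕ)
            (𝓝 (⟪w, w - T w⟫ - ⟪w, w - T w⟫)) := (hweak (w - T w)).sub tendsto_const_nhds
        simpa [inner_sub_left] using h2
      have hident : ∀ n : ℕ, ‖x n - T w‖ ^ 2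
          = ‖x n - w‖ ^ 2 + 2 * ⟪x n - w, w - T w⟫ + ‖w - T w‖ ^ 2 := by
        intro n
        have h := @norm_add_sq_real H _ _ (x n - w) (w - T w)
        rw [show (x n - w) + (w - T w) = x n - T w by abel] at h
        exact h
      have hsq : Tendsto (fun n => ‖x n - T w‖ ^ 2) (V : Filter ℕ)
          (𝓝 (Lw ^ 2 + 2 * 0 + ‖w - T w‖ ^ 2)) := by
        simp only [hident]
        exact ((hLw.pow 2).add (hcross.const_mul 2)).add tendsto_const_nhds
      have hub : Tendsto (fun n => (‖x n - T (x n)‖ + ‖x n - w‖) ^ 2) (V : Filter ℕ)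
          (𝓝 ((0 + Lw) ^ 2)) := ((Vle hxTx).add hLw).pow 2
      have hle : ∀ n, ‖x n - T w‖ ^ 2 ≤ (‖x n - T (x n)‖ + ‖x n - w‖) ^ 2 := by
        intro n
        apply pow_le_pow_left₀ (norm_nonneg _) _ 2
        calc ‖x n - T w‖ ≤ ‖x n - T (x n)‖ + ‖T (x n) - T w‖ := by
              rw [show x n - T w = (x n - T (x n)) + (T (x n) - T w) by abel]
              exact norm_add_le _ _
          _ ≤ ‖x n - T (x n)‖ + ‖x n - w‖ := by linarith [hT (x n) (hxC n) w hwC]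
      have hfin : Lw ^ 2 + 2 * 0 + ‖w - T w‖ ^ 2 ≤ (0 + Lw) ^ 2 :=
        le_of_tendsto_of_tendsto' hsq hub hle
      have hz : ‖w - T w‖ = 0 := by nlinarith [norm_nonneg (w - T w)]
      exact (sub_eq_zero.mp (norm_eq_zero.mp hz)).symm
    -- w solves the VI, via Minty
    have hwVI : ∀ v ∈ C, (0:ℝ) ≤ ⟪A w, v - w⟫ := by
      apply hMintyRev w hwC
      intro v hv
      set B : ℝ := ‖v‖ + (R + ‖u0‖) with hB
      have hB0 : 0 ≤ B := by
        rw [hB, hR]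
        positivity
      have hBt : ∀ n, ‖v - tn n‖ ≤ B := by
        intro n
        calc ‖v - tn n‖ ≤ ‖v‖ + ‖tn n‖ := norm_sub_le _ _
          _ ≤ ‖v‖ + (‖tn n - u0‖ + ‖u0‖) := by
              have : ‖tn n‖ = ‖(tn n - u0) + u0‖ := by congr 1; abel
              rw [this]
              linarith [norm_add_le (tn n - u0) u0]
          _ ≤ B := by rw [hB]; linarith [htbd n]
      have hlow : ∀ n, -((a⁻¹ + α⁻¹) * B * ‖x n - tn n‖) ≤ ⟪A v, v - tn n⟫ := by
        intro n
        set g : ℝ := ‖x n - tn n‖ with hg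
        have hg0 : 0 ≤ g := norm_nonneg _
        -- projection characterization
        have hch := hPCchar (x n - lam n • A (x n)) v hv
        rw [← htn n] at hch
        rw [show (x n - lam n • A (x n)) - tn n = (x n - tn n) - lam n • A (x n) by abel,
          inner_sub_left, real_inner_smul_left] at hch
        have hq : -(g * B) ≤ ⟪x n - tn n, v - tn n⟫ := by
          have h1 := abs_real_inner_le_norm (x n - tn n) (v - tn n)
          have h2 : ‖x n - tn n‖ * ‖v - tn n‖ ≤ g * B :=
            mul_le_mul_of_nonneg_left (hBt n) hg0
          linarith [(abs_le.mp h1).1]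
        -- lower bound for ⟪A x_n, v - t_n⟫
        have hAxn : -(a⁻¹ * (B * g)) ≤ ⟪A (x n), v - tn n⟫ := by
          rcases le_or_gt 0 ⟪A (x n), v - tn n⟫ with h | h
          · have h0 : (0:ℝ) ≤ a⁻¹ * (B * g) := mul_nonneg (by positivity) (mul_nonneg hB0 hg0)
            linarith
          · have h1 : lam n * ⟪A (x n), v - tn n⟫ ≤ a * ⟪A (x n), v - tn n⟫ :=
              mul_le_mul_of_nonpos_right (hlama n) (le_of_lt h)
            have h2 : -(g * B) ≤ a * ⟪A (x n), v - tn n⟫ := by linarith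
            have h3 : (-(B * g)) / a ≤ ⟪A (x n), v - tn n⟫ := by
              rw [div_le_iff₀ ha]
              nlinarith
            rwa [neg_div, div_eq_inv_mul] at h3
        -- second term
        have hAt : -(α⁻¹ * (B * g)) ≤ ⟪A (tn n) - A (x n), v - tn n⟫ := by
          have h1 := abs_real_inner_le_norm (A (tn n) - A (x n)) (v - tn n)
          have h2 : α * ‖A (tn n) - A (x n)‖ ≤ g := by
            have := hALip (tn n) (htC n) (x n) (hxC n)
            rwa [norm_sub_rev (tn n) (x n)] at this
          have h3 : ‖A (tn n) - A (x n)‖ ≤ α⁻¹ * g := by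
            rw [← div_eq_inv_mul, le_div_iff₀ hα]
            linarith
          have h4 : ‖A (tn n) - A (x n)‖ * ‖v - tn n‖ ≤ (α⁻¹ * g) * B := by
            apply mul_le_mul h3 (hBt n) (norm_nonneg _)
            positivity
          have := (abs_le.mp h1).1
          linarith
        have hmono := hAmono v hv (tn n) (htC n)
        have hsum : ⟪A v, v - tn n⟫
            = ⟪A v - A (tn n), v - tn n⟫ + ⟪A (tn n) - A (x n), v - tn n⟫
              + ⟪A (x n), v - tn n⟫ := by
          simp only [inner_sub_left]; ring
        linarith [hmono, hAxn, hAt, hsum]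
      have htenlow : Tendsto (fun n => -((a⁻¹ + α⁻¹) * B * ‖x n - tn n‖)) (V : Filter ℕ)
          (𝓝 0) := by
        have h1 : Tendsto (fun n => -((a⁻¹ + α⁻¹) * B) * ‖x n - tn n‖) atTop
            (𝓝 (-((a⁻¹ + α⁻¹) * B) * 0)) := hxt.const_mul _
        apply Vle
        simpa [neg_mul, mul_assoc] using h1
      have esplit : ∀ n : ℕ, ⟪A v, v - tn n⟫
          = (⟪A v, v⟫ - ⟪A v, x n⟫) - ⟪A v, tn n - x n⟫ := by
        intro n
        simp only [inner_sub_right]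
        ring
      have t2 : Tendsto (fun n => ⟪A v, tn n - x n⟫) (V : Filter ℕ) (𝓝 0) := by
        apply Vle
        apply squeeze_zero_norm (a := fun n => ‖A v‖ * ‖x n - tn n‖)
        · intro n
          rw [Real.norm_eq_abs]
          calc |⟪A v, tn n - x n⟫| ≤ ‖A v‖ * ‖tn n - x n‖ := abs_real_inner_le_norm _ _
            _ = ‖A v‖ * ‖x n - tn n‖ := by rw [norm_sub_rev]
        · simpa using hxt.const_mul ‖A v‖
      have hten : Tendsto (fun n => ⟪A v, v - tn n⟫) (V : Filter ℕ) (𝓝 ⟪A v, v - w⟫) := by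
        have t1 : Tendsto (fun n => ⟪A v, x n⟫) (V : Filter ℕ) (𝓝 ⟪A v, w⟫) := by
          have h := hweak (A v)
          have he : (fun n : ℕ => ⟪x n, A v⟫) = fun n : ℕ => ⟪A v, x n⟫ := by
            funext n
            exact real_inner_comm _ _
          rw [he] at h
          rw [real_inner_comm w (A v)]
          exact h
        have h12 : Tendsto (fun n => (⟪A v, v⟫ - ⟪A v, x n⟫) - ⟪A v, tn n - x n⟫)
            (V : Filter ℕ) (𝓝 ((⟪A v, v⟫ - ⟪A v, w⟫) - 0)) :=
          (tendsto_const_nhds.sub t1).sub t2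
        rw [show (⟪A v, v⟫ - ⟪A v, w⟫) - 0 = ⟪A v, v - w⟫ by
          rw [inner_sub_right]; ring] at h12
        simp only [esplit]
        exact h12
      exact le_of_tendsto_of_tendsto' htenlow hten hlow
    exact ⟨w, hFof w hwC hwT hwVI, hweak⟩
  -- fix an ultrafilter and get the weak limit
  obtain ⟨U, hU⟩ := Filter.exists_ultrafilter_le (atTop : Filter ℕ)
  obtain ⟨w, hwF, hwU⟩ := key U hU
  -- uniqueness of ultrafilter weak limits
  have hinlim : ∀ w' ∈ F, ∃ l : ℝ, Tendsto (fun n => ⟪x n, w - w'⟫) atTop (𝓝 l) := by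
    intro w' hw'
    obtain ⟨r1, -, hr1⟩ := hlim w hwF
    obtain ⟨r2, -, hr2⟩ := hlim w' hw'
    refine ⟨(r2 ^ 2 - r1 ^ 2 - ‖w'‖ ^ 2 + ‖w‖ ^ 2) / 2, ?_⟩
    have he : ∀ n, ⟪x n, w - w'⟫
        = (‖x n - w'‖ ^ 2 - ‖x n - w‖ ^ 2 - ‖w'‖ ^ 2 + ‖w‖ ^ 2) / 2 := by
      intro n
      have e1 := @norm_sub_sq_real H _ _ (x n) w
      have e2 := @norm_sub_sq_real H _ _ (x n) w'
      have e3 : ⟪x n, w - w'⟫ = ⟪x n, w⟫ - ⟪x n, w'⟫ := by rw [inner_sub_right]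
      linarith
    simp only [he]
    exact (((hr2.pow 2).sub (hr1.pow 2)).sub_const _).add_const _ |>.div_const _
  have huniq : ∀ (V : Ultrafilter ℕ), (V : Filter ℕ) ≤ atTop → ∀ w', w' ∈ F →
      (∀ u : H, Tendsto (fun n => ⟪x n, u⟫) (V : Filter ℕ) (𝓝 ⟪w', u⟫)) → w' = w := by
    intro V hV w' hw'F hw'
    obtain ⟨l, hl⟩ := hinlim w' hw'F
    have h1 : ⟪w, w - w'⟫ = l := tendsto_nhds_unique (hwU (w - w')) (hl.mono_left hU)
    have h2 : ⟪w', w - w'⟫ = l := tendsto_nhds_unique (hw' (w - w')) (hl.mono_left hV)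
    have h3 : ⟪w - w', w - w'⟫ = (0:ℝ) := by rw [inner_sub_left, h1, h2]; ring
    have h4 : ‖w - w'‖ ^ 2 = 0 := by rwa [real_inner_self_eq_norm_sq] at h3
    have h5 : w - w' = 0 := by
      rw [← norm_eq_zero]
      nlinarith [norm_nonneg (w - w')]
    exact (sub_eq_zero.mp h5).symm
  -- weak convergence along atTop
  have hweakAtTop : ∀ u : H, Tendsto (fun n => ⟪x n, u⟫) atTop (𝓝 ⟪w, u⟫) := by
    intro u
    rw [Filter.tendsto_iff_ultrafilter]
    intro V hV
    obtain ⟨w', hw'F, hw'⟩ := key V hV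
    rw [← huniq V hV w' hw'F hw']
    exact hw' u
  -- F is closed
  have hFclosed : IsClosed F := by
    apply IsSeqClosed.isClosed
    intro f p hf hfp
    have hpC : p ∈ C :=
      hCcl.mem_of_tendsto hfp (Filter.Eventually.of_forall fun n => (hFmem _ (hf n)).1)
    have hdist : Tendsto (fun n => ‖p - f n‖) atTop (𝓝 0) := by
      have h1 : Tendsto (fun n => p - f n) atTop (𝓝 (p - p)) := tendsto_const_nhds.sub hfp
      rw [sub_self] at h1
      simpa using h1.norm
    have hpT : T p = p := by
      have hb : ∀ n, ‖T p - p‖ ≤ 2 * ‖p - f n‖ := by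
        intro n
        have h1 : ‖T p - T (f n)‖ ≤ ‖p - f n‖ := hT p hpC (f n) (hFmem _ (hf n)).1
        have h2 : T (f n) = f n := (hFmem _ (hf n)).2.1
        calc ‖T p - p‖ ≤ ‖T p - T (f n)‖ + ‖T (f n) - p‖ := by
              rw [show T p - p = (T p - T (f n)) + (T (f n) - p) by abel]
              exact norm_add_le _ _
          _ ≤ 2 * ‖p - f n‖ := by
              rw [h2] at h1
              rw [h2, norm_sub_rev (f n) p]
              linarith
      have h0 : ‖T p - p‖ ≤ 0 :=
        ge_of_tendsto' (by simpa using hdist.const_mul 2) hb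
      have : T p - p = 0 := norm_le_zero_iff.mp h0
      exact sub_eq_zero.mp this
    have hpVI : ∀ v ∈ C, (0:ℝ) ≤ ⟪A p, v - p⟫ := by
      intro v hv
      have hAf : Tendsto (fun n => A (f n)) atTop (𝓝 (A p)) := by
        rw [tendsto_iff_norm_sub_tendsto_zero]
        apply squeeze_zero (fun n => norm_nonneg _) (g := fun n => α⁻¹ * ‖p - f n‖)
        · intro n
          have h1 := hALip (f n) (hFmem _ (hf n)).1 p hpC
          rw [norm_sub_rev p (f n), ← div_eq_inv_mul, le_div_iff₀ hα]
          linarith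
        · simpa using hdist.const_mul α⁻¹
      have hterm : Tendsto (fun n => ⟪A (f n), v - f n⟫) atTop (𝓝 ⟪A p, v - p⟫) :=
        hAf.inner (tendsto_const_nhds.sub hfp)
      exact ge_of_tendsto' hterm fun n => (hFmem _ (hf n)).2.2 v hv
    exact hFof p hpC hpT hpVI
  -- F is convex
  have hFconv : Convex ℝ F := by
    intro u hu v hv θ σ hθ hσ hsum
    obtain ⟨huC, huT, -⟩ := hFmem u hu
    obtain ⟨hvC, hvT, -⟩ := hFmem v hv
    set m := θ • u + σ • v with hm
    have hmC : m ∈ C := hCcv huC hvC hθ hσ hsum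
    have hσθ : σ = 1 - θ := by linarith
    have hθ1 : θ ≤ 1 := by linarith
    have hmT : T m = m := by
      have h1 : ‖T m - u‖ ≤ (1 - θ) * ‖u - v‖ := by
        calc ‖T m - u‖ = ‖T m - T u‖ := by rw [huT]
          _ ≤ ‖m - u‖ := hT m hmC u huC
          _ = (1 - θ) * ‖u - v‖ := by
              rw [show m - u = (1 - θ) • (v - u) by rw [hm, hσθ]; module, norm_smul,
                Real.norm_eq_abs, abs_of_nonneg (by linarith), norm_sub_rev]
      have h2 : ‖T m - v‖ ≤ θ * ‖u - v‖ := by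
        calc ‖T m - v‖ = ‖T m - T v‖ := by rw [hvT]
          _ ≤ ‖m - v‖ := hT m hmC v hvC
          _ = θ * ‖u - v‖ := by
              rw [show m - v = θ • (u - v) by rw [hm, hσθ]; module, norm_smul,
                Real.norm_eq_abs, abs_of_nonneg hθ]
      have h3 := my_combo θ (u - T m) (v - T m)
      rw [show θ • (u - T m) + (1 - θ) • (v - T m) = m - T m by rw [hm, hσθ]; module,
        show (u - T m) - (v - T m) = u - v by abel] at h3
      have h1' : ‖u - T m‖ ^ 2 ≤ ((1 - θ) * ‖u - v‖) ^ 2 := by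
        rw [norm_sub_rev]
        exact pow_le_pow_left₀ (norm_nonneg _) h1 2
      have h2' : ‖v - T m‖ ^ 2 ≤ (θ * ‖u - v‖) ^ 2 := by
        rw [norm_sub_rev]
        exact pow_le_pow_left₀ (norm_nonneg _) h2 2
      have h6 : ‖m - T m‖ ^ 2 ≤ 0 := by
        rw [h3]
        nlinarith [mul_le_mul_of_nonneg_left h1' hθ,
          mul_le_mul_of_nonneg_left h2' (by linarith : (0:ℝ) ≤ 1 - θ)]
      have h7 : m - T m = 0 := by
        rw [← norm_eq_zero]
        nlinarith [norm_nonneg (m - T m)]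
      exact (sub_eq_zero.mp h7).symm
    have hmVI : ∀ z ∈ C, (0:ℝ) ≤ ⟪A m, z - m⟫ := by
      apply hMintyRev m hmC
      intro z hz
      have h1 := hMintyFwd u hu z hz
      have h2 := hMintyFwd v hv z hz
      have hzm : z - m = θ • (z - u) + (1 - θ) • (z - v) := by rw [hm, hσθ]; module
      have h3 : ⟪A z, z - m⟫ = θ * ⟪A z, z - u⟫ + (1 - θ) * ⟪A z, z - v⟫ := by
        rw [hzm, inner_add_right, real_inner_smul_right, real_inner_smul_right]
      rw [h3]
      have := mul_nonneg hθ h1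
      have := mul_nonneg (by linarith : (0:ℝ) ≤ 1 - θ) h2
      linarith
    exact hFof m hmC hmT hmVI
  -- projections onto F
  have hPFchar := my_proj_char hFconv hPF
  set zn : ℕ → H := fun n => PF (x n) with hzn
  have hznF : ∀ n, zn n ∈ F := fun n => (hPF (x n)).1
  set ρ : ℕ → ℝ := fun n => ‖x n - zn n‖ with hρdef
  have hρnn : ∀ n, 0 ≤ ρ n := fun n => norm_nonneg _
  have hρanti : Antitone ρ := by
    apply antitone_nat_of_succ_le
    intro n
    calc ρ (n + 1) ≤ ‖x (n + 1) - zn n‖ := (hPF (x (n + 1))).2 _ (hznF n)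
      _ ≤ ‖x n - zn n‖ := le_trans (hfej2 _ (hznF n) n) (hfej1 _ (hznF n) n)
  have hρbdd : BddBelow (Set.range ρ) := ⟨0, by rintro r ⟨n, rfl⟩; exact hρnn n⟩
  have hρlim : Tendsto ρ atTop (𝓝 (⨅ n, ρ n)) := tendsto_atTop_ciInf hρanti hρbdd
  set rinf : ℝ := ⨅ n, ρ n with hrinf
  have hrinf0 : 0 ≤ rinf := le_ciInf hρnn
  have hrinf_le : ∀ n, rinf ≤ ρ n := fun n => ciInf_le hρbdd n
  have hCauchyEst : ∀ n m, n ≤ m → ‖zn n - zn m‖ ^ 2 ≤ 2 * (ρ n ^ 2 - ρ m ^ 2) := by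
    intro n m hnm
    have hmid : (2⁻¹:ℝ) • zn n + (2⁻¹:ℝ) • zn m ∈ F :=
      hFconv (hznF n) (hznF m) (by norm_num) (by norm_num) (by norm_num)
    have h1 : ρ m ≤ ‖x m - ((2⁻¹:ℝ) • zn n + (2⁻¹:ℝ) • zn m)‖ := (hPF (x m)).2 _ hmid
    have h2 : ‖x m - zn n‖ ≤ ρ n := hanti _ (hznF n) hnm
    have hpar := parallelogram_law_with_norm ℝ (zn n - x m) (zn m - x m)
    have ha : (zn n - x m) - (zn m - x m) = zn n - zn m := by abel
    have hb : (zn n - x m) + (zn m - x m)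
        = (2:ℝ) • (((2⁻¹:ℝ) • zn n + (2⁻¹:ℝ) • zn m) - x m) := by module
    rw [ha, hb] at hpar
    have hb2 : ‖(2:ℝ) • (((2⁻¹:ℝ) • zn n + (2⁻¹:ℝ) • zn m) - x m)‖
        = 2 * ‖x m - ((2⁻¹:ℝ) • zn n + (2⁻¹:ℝ) • zn m)‖ := by
      rw [norm_smul, Real.norm_eq_abs, norm_sub_rev]
      norm_num
    rw [hb2] at hpar
    have h3 : ‖zn n - x m‖ = ‖x m - zn n‖ := norm_sub_rev _ _
    have h4 : ‖zn m - x m‖ = ρ m := by rw [norm_sub_rev]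
    rw [h3, h4] at hpar
    have hsq1 : ρ m ^ 2 ≤ ‖x m - ((2⁻¹:ℝ) • zn n + (2⁻¹:ℝ) • zn m)‖ ^ 2 :=
      pow_le_pow_left₀ (hρnn m) h1 2
    have hsq2 : ‖x m - zn n‖ ^ 2 ≤ ρ n ^ 2 := pow_le_pow_left₀ (norm_nonneg _) h2 2
    linarith [hpar, hsq1, hsq2]
  have hznCauchy : CauchySeq zn := by
    apply cauchySeq_of_le_tendsto_0 (b := fun N => Real.sqrt (2 * (ρ N ^ 2 - rinf ^ 2)))
    · intro n m N hn hm
      have hkey : ∀ i j, N ≤ i → i ≤ j → dist (zn i) (zn j) ≤ Real.sqrt (2 * (ρ N ^ 2 - rinf ^ 2)) := by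
        intro i j hi hij
        rw [dist_eq_norm]
        apply Real.le_sqrt_of_sq_le
        calc ‖zn i - zn j‖ ^ 2 ≤ 2 * (ρ i ^ 2 - ρ j ^ 2) := hCauchyEst i j hij
          _ ≤ 2 * (ρ N ^ 2 - rinf ^ 2) := by
              nlinarith [hρanti hi, hrinf_le j, hρnn i, hρnn j, hrinf0]
      rcases le_total n m with h | h
      · exact hkey n m hn h
      · rw [dist_comm]
        exact hkey m n hm h
    · have h1 : Tendsto (fun N => 2 * (ρ N ^ 2 - rinf ^ 2)) atTop
          (𝓝 (2 * (rinf ^ 2 - rinf ^ 2))) := ((hρlim.pow 2).sub_const _).const_mul 2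
      rw [show (2:ℝ) * (rinf ^ 2 - rinf ^ 2) = 0 by ring] at h1
      simpa [Real.sqrt_zero] using h1.sqrt
  obtain ⟨q, hq⟩ := cauchySeq_tendsto_of_complete hznCauchy
  have hqw : q = w := by
    have hchar : ∀ n, ⟪x n - zn n, w - zn n⟫ ≤ 0 := fun n => hPFchar (x n) w hwF
    have hlim2 : Tendsto (fun n => ⟪x n - zn n, w - zn n⟫) atTop (𝓝 ⟪w - q, w - q⟫) := by
      have e : ∀ n, ⟪x n - zn n, w - zn n⟫
          = (⟪x n, w - q⟫ + ⟪x n, q - zn n⟫) - ⟪zn n, w - zn n⟫ := by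
        intro n
        rw [← inner_add_right, show (w - q) + (q - zn n) = w - zn n by abel, inner_sub_left]
      have t1 : Tendsto (fun n => ⟪x n, w - q⟫) atTop (𝓝 ⟪w, w - q⟫) := hweakAtTop (w - q)
      have t2 : Tendsto (fun n => ⟪x n, q - zn n⟫) atTop (𝓝 0) := by
        apply squeeze_zero_norm (a := fun n => M * ‖q - zn n‖)
        · intro n
          rw [Real.norm_eq_abs]
          calc |⟪x n, q - zn n⟫| ≤ ‖x n‖ * ‖q - zn n‖ := abs_real_inner_le_norm _ _
            _ ≤ M * ‖q - zn n‖ := mul_le_mul_of_nonneg_right (hMx n) (norm_nonneg _)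
        · have h1 : Tendsto (fun n => q - zn n) atTop (𝓝 (q - q)) := tendsto_const_nhds.sub hq
          rw [sub_self] at h1
          simpa using (h1.norm.const_mul M)
      have t3 : Tendsto (fun n => ⟪zn n, w - zn n⟫) atTop (𝓝 ⟪q, w - q⟫) :=
        hq.inner (tendsto_const_nhds.sub hq)
      have hcomb : Tendsto (fun n => (⟪x n, w - q⟫ + ⟪x n, q - zn n⟫) - ⟪zn n, w - zn n⟫)
          atTop (𝓝 ((⟪w, w - q⟫ + 0) - ⟪q, w - q⟫)) := (t1.add t2).sub t3
      rw [show (⟪w, w - q⟫ + 0) - ⟪q, w - q⟫ = ⟪w - q, w - q⟫ by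
        rw [inner_sub_left]; ring] at hcomb
      simp only [e]
      exact hcomb
    have h0 : ⟪w - q, w - q⟫ ≤ (0:ℝ) :=
      le_of_tendsto hlim2 (Filter.Eventually.of_forall hchar)
    have h1 : ‖w - q‖ ^ 2 ≤ 0 := by rwa [real_inner_self_eq_norm_sq] at h0
    have h2 : w - q = 0 := by
      rw [← norm_eq_zero]
      nlinarith [norm_nonneg (w - q)]
    exact (sub_eq_zero.mp h2).symm
  refine ⟨w, hwF, hweakAtTop, ?_⟩
  rw [← hqw]
  exact hq
end

section
/- Let C be a nonempty closed convex subset of a real Hilbert space H and let A : C → H be an α-inverse strongly monotone mapping (α > 0) such that the solution set Ω of VI(C, A) is nonempty. Let {λ_n} ⊂ [a, b] for some a, b with 0 < a ≤ b < 2α and {α_n} ⊂ [c, d] for some c, d with 0 < c ≤ d < 1. Given x₀ ∈ C, define y_n = α_n x_n + (1 − α_n) P_C(x_n − λ_n A x_n) and x_{n+1} = P_C(y_n − λ_n A y_n). Then {x_n} converges weakly to a point p ∈ Ω, and p = lim_{n→∞} P_Ω x_n (strong limit). -/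
/-!
Every point `q` of `Ω` is a fixed point of `P_C (I - λ A)`, and inverse strong monotonicity makes
one such step shrink `‖· - q‖²` by `λ (2α - λ) ‖A · - A q‖²`; the averaging in `y_n` shrinks it
further by `α_n (1 - α_n) ‖x_n - P_C (x_n - λ_n A x_n)‖²`. So `(x_n)` is Fejér monotone with
respect to `Ω` and both residuals tend to `0`. A weak cluster point `z` then lies in `C`, satisfies
`A z = A q`, and solves the variational inequality by passing to the limit in the variational
inequality of the projections; Opial's argument gives weak convergence of the whole sequence to
some `p ∈ Ω`. Finally `‖x_n - P_Ω x_n‖` decreases, which makes `(P_Ω x_n)` Cauchy, and the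
variational characterization of `P_Ω` identifies its limit with `p`.
-/

open scoped RealInnerProductSpace
open Filter Topology

def IsMetricProjection {E : Type*} [NormedAddCommGroup E] (C : Set E) (P : E → E) : Prop :=
  ∀ u, P u ∈ C ∧ ∀ w ∈ C, ‖u - P u‖ ≤ ‖u - w‖

theorem IsMetricProjection.mem {E : Type*} [NormedAddCommGroup E] {C : Set E} {P : E → E}
    (hP : IsMetricProjection C P) (u : E) : P u ∈ C :=
  (hP u).1

theorem norm_le_of_antitone_norm_sub {E : Type*} [SeminormedAddGroup E] {x : ℕ → E} {q : E}
    (h : Antitone fun n => ‖x n - q‖) (n : ℕ) : ‖x n‖ ≤ ‖q‖ + ‖x 0 - q‖ :=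
  (norm_le_norm_add_norm_sub' (x n) q).trans (add_le_add_right (h n.zero_le) _)

theorem cauchySeq_of_norm_sub_sq_le {E : Type*} [SeminormedAddCommGroup E] {u : ℕ → E}
    {s : ℕ → ℝ} (hs : BddBelow (Set.range s))
    (h : ∀ n m, n ≤ m → ‖u m - u n‖ ^ 2 ≤ s n - s m) : CauchySeq u := by
  have hanti : Antitone s := fun n m hnm => by linarith [h n m hnm, sq_nonneg ‖u m - u n‖]
  have hlim := tendsto_atTop_ciInf hanti hs
  refine cauchySeq_of_le_tendsto_0 (fun N => √(s N - ⨅ n, s n)) (fun n m N hn hm => ?_) ?_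
  · wlog hnm : n ≤ m generalizing n m
    · rw [dist_comm]
      exact this m n hm hn (le_of_not_ge hnm)
    rw [dist_comm, dist_eq_norm]
    exact Real.le_sqrt_of_sq_le (by linarith [h n m hnm, hanti hn, ciInf_le hs m])
  · simpa using (hlim.sub_const (⨅ n, s n)).sqrt

theorem tendsto_zero_of_mul_norm_sq_le_sub_succ {E : Type*} [SeminormedAddCommGroup E]
    {v : ℕ → E} {D : ℕ → ℝ} {L K : ℝ} (hD : Tendsto D atTop (𝓝 L)) (hK : 0 < K)
    (h : ∀ n, K * ‖v n‖ ^ 2 ≤ D n - D (n + 1)) : Tendsto v atTop (𝓝 0) := by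
  have hdiff : Tendsto (fun n => (D n - D (n + 1)) / K) atTop (𝓝 0) := by
    simpa using (hD.sub (hD.comp (tendsto_add_atTop_nat 1))).div_const K
  have hsq : Tendsto (fun n => ‖v n‖ ^ 2) atTop (𝓝 0) :=
    squeeze_zero (fun n => sq_nonneg _) (fun n => (le_div_iff₀' hK).2 (h n)) hdiff
  rw [tendsto_zero_iff_norm_tendsto_zero]
  simpa [Real.sqrt_sq (norm_nonneg _)] using hsq.sqrt

section Hilbert

variable {H : Type*} [NormedAddCommGroup H] [InnerProductSpace ℝ H]

def IsInverseStronglyMonotoneOn (A : H → H) (C : Set H) (α : ℝ) : Prop :=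
  ∀ x ∈ C, ∀ y ∈ C, ⟪A x - A y, x - y⟫ ≥ α * ‖A x - A y‖ ^ 2

def solutionsVI (C : Set H) (A : H → H) : Set H :=
  {x ∈ C | ∀ y ∈ C, ⟪A x, y - x⟫ ≥ 0}

/-- Weak convergence, tested against every vector via the inner product (Riesz). -/
def TendstoWeakly {ι : Type*} (x : ι → H) (l : Filter ι) (p : H) : Prop :=
  ∀ u, Tendsto (fun n => ⟪x n, u⟫) l (𝓝 ⟪p, u⟫)

namespace IsMetricProjection

variable {C : Set H} {P : H → H}

theorem inner_le_zero (hC : Convex ℝ C) (hP : IsMetricProjection C P) (u : H) {w : H}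
    (hw : w ∈ C) : ⟪u - P u, w - P u⟫ ≤ 0 := by
  have : Nonempty C := ⟨⟨P u, hP.mem u⟩⟩
  refine (norm_eq_iInf_iff_real_inner_le_zero hC (hP.mem u)).1 ?_ w hw
  exact le_antisymm (le_ciInf fun w => (hP u).2 w w.2)
    (ciInf_le (f := fun w : C => ‖u - w‖) ⟨0, Set.forall_mem_range.2 fun _ => norm_nonneg _⟩
      ⟨P u, hP.mem u⟩)

theorem eq_of_forall_inner_le_zero (hC : Convex ℝ C) (hP : IsMetricProjection C P) {u v : H}
    (hv : v ∈ C) (h : ∀ w ∈ C, ⟪u - v, w - v⟫ ≤ 0) : P u = v := by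
  have h₁ := hP.inner_le_zero hC u hv
  have h₂ := h (P u) (hP.mem u)
  rw [← neg_sub (P u) v, inner_neg_right] at h₁
  have e : ⟪P u - v, P u - v⟫ = ⟪u - v, P u - v⟫ - ⟪u - P u, P u - v⟫ := by
    rw [← inner_sub_left, sub_sub_sub_cancel_left]
  exact sub_eq_zero.1 (real_inner_self_nonpos.1 (by linarith))

theorem norm_sub_sq_add_norm_sub_sq_le (hC : Convex ℝ C) (hP : IsMetricProjection C P) (u : H)
    {w : H} (hw : w ∈ C) : ‖u - P u‖ ^ 2 + ‖P u - w‖ ^ 2 ≤ ‖u - w‖ ^ 2 := by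
  have h := hP.inner_le_zero hC u hw
  rw [← sub_add_sub_cancel u (P u) w, norm_add_sq_real, ← neg_sub w (P u), inner_neg_right]
  linarith

theorem norm_sub_sq_le_inner (hC : Convex ℝ C) (hP : IsMetricProjection C P) (u v : H) :
    ‖P u - P v‖ ^ 2 ≤ ⟪u - v, P u - P v⟫ := by
  have h₁ := hP.inner_le_zero hC u (hP.mem v)
  have h₂ := hP.inner_le_zero hC v (hP.mem u)
  have e : ⟪u - v, P u - P v⟫ - ‖P u - P v‖ ^ 2
      = -(⟪u - P u, P v - P u⟫ + ⟪v - P v, P u - P v⟫) := by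
    rw [← real_inner_self_eq_norm_sq]
    simp only [inner_sub_left, inner_sub_right]
    ring
  linarith

theorem norm_sub_le (hC : Convex ℝ C) (hP : IsMetricProjection C P) (u v : H) :
    ‖P u - P v‖ ≤ ‖u - v‖ := by
  have h := hP.norm_sub_sq_le_inner hC u v
  have hcs := real_inner_le_norm (u - v) (P u - P v)
  nlinarith [norm_nonneg (P u - P v), norm_nonneg (u - v)]

end IsMetricProjection

namespace IsInverseStronglyMonotoneOn

variable {A : H → H} {C : Set H} {α : ℝ}

theorem inner_nonneg (hA : IsInverseStronglyMonotoneOn A C α) (hα : 0 ≤ α) {x y : H}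
    (hx : x ∈ C) (hy : y ∈ C) : 0 ≤ ⟪A x - A y, x - y⟫ :=
  (mul_nonneg hα (sq_nonneg _)).trans (hA x hx y hy)

theorem mul_norm_sub_le (hA : IsInverseStronglyMonotoneOn A C α) {x y : H} (hx : x ∈ C)
    (hy : y ∈ C) : α * ‖A x - A y‖ ≤ ‖x - y‖ := by
  have h := hA x hx y hy
  have hcs := real_inner_le_norm (A x - A y) (x - y)
  rcases (norm_nonneg (A x - A y)).eq_or_lt with h0 | h0
  · rw [← h0, mul_zero]
    exact norm_nonneg _
  · nlinarith

theorem continuousOn (hA : IsInverseStronglyMonotoneOn A C α) (hα : 0 < α) : ContinuousOn A C :=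
  LipschitzOnWith.continuousOn (K := Real.toNNReal α⁻¹) <| .of_dist_le_mul fun x hx y hy => by
    rw [dist_eq_norm, dist_eq_norm, Real.coe_toNNReal _ (inv_nonneg.2 hα.le), inv_mul_eq_div,
      le_div_iff₀ hα, mul_comm]
    exact hA.mul_norm_sub_le hx hy

/-- Minty's characterization of the solutions of the variational inequality. -/
theorem mem_solutionsVI_iff (hA : IsInverseStronglyMonotoneOn A C α) (hα : 0 < α)
    (hC : Convex ℝ C) {z : H} : z ∈ solutionsVI C A ↔ z ∈ C ∧ ∀ w ∈ C, 0 ≤ ⟪A w, w - z⟫ := by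
  refine ⟨fun hz => ⟨hz.1, fun w hw => ?_⟩, fun ⟨hzC, hmin⟩ => ⟨hzC, fun w hw => ?_⟩⟩
  · have := hA.inner_nonneg hα.le hw hz.1
    rw [inner_sub_left] at this
    linarith [hz.2 w hw]
  · set s : ℕ → ℝ := fun k => 1 / ((k : ℝ) + 1)
    have hs : ∀ k, s k ∈ Set.Icc (0 : ℝ) 1 := fun k =>
      ⟨by positivity, div_le_one_of_le₀ (by simp) (by positivity)⟩
    have hmem : ∀ k, z + s k • (w - z) ∈ C := fun k => hC.add_smul_sub_mem hzC hw (hs k)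
    have hlim : Tendsto (fun k => z + s k • (w - z)) atTop (𝓝 z) := by
      simpa [s] using tendsto_const_nhds.add
        ((tendsto_one_div_add_atTop_nhds_zero_nat (𝕜 := ℝ)).smul_const (w - z))
    have hAlim : Tendsto (fun k => ⟪A (z + s k • (w - z)), w - z⟫) atTop (𝓝 ⟪A z, w - z⟫) :=
      ((hA.continuousOn hα z hzC).tendsto.comp
        (tendsto_nhdsWithin_iff.2 ⟨hlim, .of_forall hmem⟩)).inner tendsto_const_nhds
    refine ge_of_tendsto' hAlim fun k => ?_
    have h := hmin _ (hmem k)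
    rw [add_sub_cancel_left, real_inner_smul_right] at h
    exact (mul_nonneg_iff_of_pos_left (by positivity)).1 h

theorem convex_solutionsVI (hA : IsInverseStronglyMonotoneOn A C α) (hα : 0 < α)
    (hC : Convex ℝ C) : Convex ℝ (solutionsVI C A) := by
  intro z₁ hz₁ z₂ hz₂ θ σ hθ hσ hθσ
  rw [hA.mem_solutionsVI_iff hα hC] at hz₁ hz₂ ⊢
  refine ⟨hC hz₁.1 hz₂.1 hθ hσ hθσ, fun w hw => ?_⟩
  have e : w - (θ • z₁ + σ • z₂) = θ • (w - z₁) + σ • (w - z₂) :=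
    calc w - (θ • z₁ + σ • z₂) = (θ + σ) • w - (θ • z₁ + σ • z₂) := by rw [hθσ, one_smul]
      _ = θ • (w - z₁) + σ • (w - z₂) := by module
  rw [e, inner_add_right, real_inner_smul_right, real_inner_smul_right]
  exact add_nonneg (mul_nonneg hθ (hz₁.2 w hw)) (mul_nonneg hσ (hz₂.2 w hw))

end IsInverseStronglyMonotoneOn

section ProjectedGradient

variable {C : Set H} {P : H → H} {A : H → H} {α : ℝ}

theorem IsMetricProjection.apply_sub_smul_eq (hC : Convex ℝ C) (hP : IsMetricProjection C P)
    {q : H} (hq : q ∈ solutionsVI C A) {γ : ℝ} (hγ : 0 ≤ γ) : P (q - γ • A q) = q :=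
  hP.eq_of_forall_inner_le_zero hC hq.1 fun w hw => by
    rw [sub_sub_cancel_left, inner_neg_left, real_inner_smul_left]
    exact neg_nonpos.2 (mul_nonneg hγ (hq.2 w hw))

theorem norm_proj_sub_smul_sub_sq_le (hC : Convex ℝ C) (hP : IsMetricProjection C P)
    (hA : IsInverseStronglyMonotoneOn A C α) {z q : H} (hz : z ∈ C) (hq : q ∈ solutionsVI C A)
    {γ : ℝ} (hγ : 0 ≤ γ) :
    ‖P (z - γ • A z) - q‖ ^ 2 ≤ ‖z - q‖ ^ 2 - γ * (2 * α - γ) * ‖A z - A q‖ ^ 2 := by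
  have hne := hP.norm_sub_le hC (z - γ • A z) (q - γ • A q)
  rw [hP.apply_sub_smul_eq hC hq hγ] at hne
  have e : z - γ • A z - (q - γ • A q) = (z - q) - γ • (A z - A q) := by module
  have hism := hA z hz q hq.1
  calc ‖P (z - γ • A z) - q‖ ^ 2 ≤ ‖(z - q) - γ • (A z - A q)‖ ^ 2 := by
        rw [← e]; exact pow_le_pow_left₀ (norm_nonneg _) hne 2
    _ = ‖z - q‖ ^ 2 - 2 * γ * ⟪A z - A q, z - q⟫ + γ ^ 2 * ‖A z - A q‖ ^ 2 := by
        rw [norm_sub_sq_real, norm_smul, real_inner_smul_right, real_inner_comm, mul_pow,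
          Real.norm_eq_abs, sq_abs]
        ring
    _ ≤ ‖z - q‖ ^ 2 - γ * (2 * α - γ) * ‖A z - A q‖ ^ 2 := by nlinarith

theorem norm_sq_smul_add_one_sub_smul (μ : ℝ) (u v : H) :
    ‖μ • u + (1 - μ) • v‖ ^ 2 = μ * ‖u‖ ^ 2 + (1 - μ) * ‖v‖ ^ 2 - μ * (1 - μ) * ‖u - v‖ ^ 2 := by
  rw [norm_add_sq_real, norm_sub_sq_real, norm_smul, norm_smul, real_inner_smul_left,
    real_inner_smul_right, mul_pow, mul_pow, Real.norm_eq_abs, Real.norm_eq_abs, sq_abs, sq_abs]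
  ring

theorem norm_extragradient_step_sub_sq_le (hC : Convex ℝ C) (hP : IsMetricProjection C P)
    (hA : IsInverseStronglyMonotoneOn A C α) {z q : H} (hz : z ∈ C) (hq : q ∈ solutionsVI C A)
    {γ μ : ℝ} (hγ : 0 ≤ γ) (hγα : γ ≤ 2 * α) (hμ₀ : 0 ≤ μ) (hμ₁ : μ ≤ 1) {y : H}
    (hy : y = μ • z + (1 - μ) • P (z - γ • A z)) :
    ‖P (y - γ • A y) - q‖ ^ 2 ≤ ‖z - q‖ ^ 2 - μ * (1 - μ) * ‖z - P (z - γ • A z)‖ ^ 2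
      - (1 - μ) * (γ * (2 * α - γ)) * ‖A z - A q‖ ^ 2 := by
  set t := P (z - γ • A z)
  have hyC : y ∈ C := hy ▸ hC hz (hP.mem _) hμ₀ (sub_nonneg.2 hμ₁) (add_sub_cancel μ 1)
  have hy_q : ‖y - q‖ ^ 2
      = μ * ‖z - q‖ ^ 2 + (1 - μ) * ‖t - q‖ ^ 2 - μ * (1 - μ) * ‖z - t‖ ^ 2 := by
    rw [← sub_sub_sub_cancel_right z t q, ← norm_sq_smul_add_one_sub_smul, hy]
    congr 2
    module
  have ht := norm_proj_sub_smul_sub_sq_le hC hP hA hz hq hγ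
  have hyt := norm_proj_sub_smul_sub_sq_le hC hP hA hyC hq hγ
  have hγ' : 0 ≤ γ * (2 * α - γ) * ‖A y - A q‖ ^ 2 :=
    mul_nonneg (mul_nonneg hγ (by linarith)) (sq_nonneg _)
  nlinarith [mul_le_mul_of_nonneg_left ht (sub_nonneg.2 hμ₁)]

theorem norm_extragradient_step_sub_sq_add_le (hC : Convex ℝ C) (hP : IsMetricProjection C P)
    (hA : IsInverseStronglyMonotoneOn A C α) {z q : H} (hz : z ∈ C) (hq : q ∈ solutionsVI C A)
    {a b c d γ μ : ℝ} (ha : 0 < a) (hb : b < 2 * α) (hc : 0 < c) (hd : d < 1)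
    (hγ : γ ∈ Set.Icc a b) (hμ : μ ∈ Set.Icc c d) {y : H}
    (hy : y = μ • z + (1 - μ) • P (z - γ • A z)) :
    ‖P (y - γ • A y) - q‖ ^ 2 + c * (1 - d) * ‖z - P (z - γ • A z)‖ ^ 2
      + (1 - d) * (a * (2 * α - b)) * ‖A z - A q‖ ^ 2 ≤ ‖z - q‖ ^ 2 := by
  obtain ⟨hγa, hγb⟩ := hγ
  obtain ⟨hμc, hμd⟩ := hμ
  have h := norm_extragradient_step_sub_sq_le hC hP hA hz hq (ha.trans_le hγa).le (by linarith)
    (hc.trans_le hμc).le (by linarith) hy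
  have hcd : c * (1 - d) ≤ μ * (1 - μ) := mul_le_mul hμc (by linarith) (by linarith) (by linarith)
  have hab : (1 - d) * (a * (2 * α - b)) ≤ (1 - μ) * (γ * (2 * α - γ)) :=
    mul_le_mul (by linarith) (mul_le_mul hγa (by linarith) (by linarith) (by linarith))
      (mul_nonneg ha.le (by linarith)) (by linarith)
  nlinarith [mul_le_mul_of_nonneg_right hcd (sq_nonneg ‖z - P (z - γ • A z)‖),
    mul_le_mul_of_nonneg_right hab (sq_nonneg ‖A z - A q‖)]

end ProjectedGradient

section Weak

variable {ι : Type*} {l : Filter ι} {x : ι → H} {p : H}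

theorem TendstoWeakly.tendsto_inner (hx : TendstoWeakly x l p) {M : ℝ} (hM : ∀ n, ‖x n‖ ≤ M)
    {a : ι → H} {b : H} (ha : Tendsto a l (𝓝 b)) :
    Tendsto (fun n => ⟪a n, x n⟫) l (𝓝 ⟪b, p⟫) := by
  have hsmall : Tendsto (fun n => ⟪a n - b, x n⟫) l (𝓝 0) := by
    refine squeeze_zero_norm (fun n => ?_)
      (by simpa using (tendsto_sub_nhds_zero_iff.2 ha).norm.mul_const M)
    exact (abs_real_inner_le_norm _ _).trans (mul_le_mul_of_nonneg_left (hM n) (norm_nonneg _))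
  convert hsmall.add (hx b) using 1
  · ext n
    rw [inner_sub_left, real_inner_comm b]
    ring
  · rw [zero_add, real_inner_comm]

theorem TendstoWeakly.mem_of_convex_of_isClosed [CompleteSpace H] [l.NeBot]
    (hx : TendstoWeakly x l p) {C : Set H} (hC : Convex ℝ C) (hCcl : IsClosed C)
    (hxC : ∀ n, x n ∈ C) : p ∈ C := by
  by_contra hp
  obtain ⟨f, r, hfC, hfp⟩ := geometric_hahn_banach_closed_point hC hCcl hp
  have hf : ∀ w, f w = ⟪w, (InnerProductSpace.toDual ℝ H).symm f⟫ := fun w => by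
    rw [real_inner_comm, InnerProductSpace.toDual_symm_apply]
  have : ⟪p, (InnerProductSpace.toDual ℝ H).symm f⟫ ≤ r :=
    le_of_tendsto (hx _) (.of_forall fun n => (hf (x n) ▸ hfC _ (hxC n)).le)
  linarith [hf p]

/-- Bounded families have weak limits along ultrafilters: the limits of `⟪x n, u⟫` exist by
compactness of intervals and form a bounded linear functional, represented by Riesz. -/
theorem TendstoWeakly.exists_of_norm_le [CompleteSpace H] (V : Ultrafilter ι) {M : ℝ}
    (hM : ∀ n, ‖x n‖ ≤ M) : ∃ p, TendstoWeakly x V p := by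
  have hbd : ∀ u n, |⟪x n, u⟫| ≤ M * ‖u‖ := fun u n =>
    (abs_real_inner_le_norm _ _).trans (mul_le_mul_of_nonneg_right (hM n) (norm_nonneg _))
  have hlim : ∀ u, ∃ r, Tendsto (fun n => ⟪x n, u⟫) V (𝓝 r) := fun u => by
    obtain ⟨r, -, hr⟩ := isCompact_Icc.ultrafilter_le_nhds (V.map fun n => ⟪x n, u⟫) (by
      rw [Ultrafilter.coe_map, le_principal_iff]
      exact mem_map.2 (univ_mem' fun n => abs_le.1 (hbd u n)))
    exact ⟨r, hr⟩
  choose L hL using hlim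
  let F : H →L[ℝ] ℝ := LinearMap.mkContinuous
    { toFun := L
      map_add' := fun u v => tendsto_nhds_unique (hL (u + v))
        (by simpa only [inner_add_right] using (hL u).add (hL v))
      map_smul' := fun r u => tendsto_nhds_unique (hL (r • u))
        (by simpa only [real_inner_smul_right, RingHom.id_apply, smul_eq_mul] using
          (hL u).const_mul r) }
    M fun u => le_of_tendsto (hL u).norm (.of_forall fun n => hbd u n)
  exact ⟨(InnerProductSpace.toDual ℝ H).symm F, fun u => by
    rw [InnerProductSpace.toDual_symm_apply]
    exact hL u⟩

theorem TendstoWeakly.sq_eq_sq_add_norm_sub_sq [l.NeBot] (hx : TendstoWeakly x l p) {q : H}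
    {r s : ℝ} (hr : Tendsto (fun n => ‖x n - p‖) l (𝓝 r))
    (hs : Tendsto (fun n => ‖x n - q‖) l (𝓝 s)) : s ^ 2 = r ^ 2 + ‖p - q‖ ^ 2 := by
  have hcross : Tendsto (fun n => ⟪x n - p, p - q⟫) l (𝓝 0) := by
    simpa only [inner_sub_left, sub_self] using (hx (p - q)).sub_const ⟪p, p - q⟫
  have h := ((hr.pow 2).add (hcross.const_mul 2)).add_const (‖p - q‖ ^ 2)
  refine tendsto_nhds_unique (hs.pow 2) ?_
  convert h using 2
  · rw [← norm_add_sq_real, sub_add_sub_cancel]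
  · ring

end Weak

section Fejer

variable {x : ℕ → H} {S : Set H}

/-- Opial's argument: each of `p`, `q` is asymptotically farther than the other from the
sequence. -/
theorem eq_of_tendstoWeakly_of_fejer (hfejer : ∀ q ∈ S, Antitone fun n => ‖x n - q‖)
    {l₁ l₂ : Filter ℕ} [l₁.NeBot] [l₂.NeBot] (h₁ : l₁ ≤ atTop) (h₂ : l₂ ≤ atTop) {p q : H}
    (hp : p ∈ S) (hq : q ∈ S) (hxp : TendstoWeakly x l₁ p) (hxq : TendstoWeakly x l₂ q) :
    p = q := by
  have hlim : ∀ q ∈ S, Tendsto (fun n => ‖x n - q‖) atTop (𝓝 (⨅ n, ‖x n - q‖)) := fun q hq =>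
    tendsto_atTop_ciInf (hfejer q hq) ⟨0, Set.forall_mem_range.2 fun _ => norm_nonneg _⟩
  have e₁ := hxp.sq_eq_sq_add_norm_sub_sq ((hlim p hp).mono_left h₁) ((hlim q hq).mono_left h₁)
  have e₂ := hxq.sq_eq_sq_add_norm_sub_sq ((hlim q hq).mono_left h₂) ((hlim p hp).mono_left h₂)
  rw [norm_sub_rev] at e₂
  have : ‖p - q‖ ^ 2 = 0 := by linarith
  exact norm_sub_eq_zero_iff.1 (pow_eq_zero_iff two_ne_zero |>.1 this)

theorem exists_tendstoWeakly_of_fejer [CompleteSpace H] (hS : S.Nonempty)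
    (hfejer : ∀ q ∈ S, Antitone fun n => ‖x n - q‖)
    (hclust : ∀ V : Ultrafilter ℕ, (V : Filter ℕ) ≤ atTop →
      ∀ z, TendstoWeakly x (V : Filter ℕ) z → z ∈ S) :
    ∃ p ∈ S, TendstoWeakly x atTop p := by
  obtain ⟨q, hq⟩ := hS
  have hcl : ∀ V : Ultrafilter ℕ, (V : Filter ℕ) ≤ atTop →
      ∃ z ∈ S, TendstoWeakly x (V : Filter ℕ) z := fun V hV =>
    have ⟨z, hz⟩ := TendstoWeakly.exists_of_norm_le V (norm_le_of_antitone_norm_sub (hfejer q hq))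
    ⟨z, hclust V hV z hz, hz⟩
  obtain ⟨p, hp, hxp⟩ := hcl (.of atTop) (Ultrafilter.of_le _)
  refine ⟨p, hp, fun u => (tendsto_iff_ultrafilter _ atTop _).2 fun V hV => ?_⟩
  obtain ⟨z, hz, hxz⟩ := hcl V hV
  rw [eq_of_tendstoWeakly_of_fejer hfejer (Ultrafilter.of_le _) hV hp hz hxp hxz]
  exact hxz u

theorem tendsto_proj_of_fejer [CompleteSpace H] (hS : Convex ℝ S) {P : H → H}
    (hP : IsMetricProjection S P) (hfejer : ∀ q ∈ S, Antitone fun n => ‖x n - q‖) {p : H}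
    (hp : p ∈ S) (hxp : TendstoWeakly x atTop p) : Tendsto (fun n => P (x n)) atTop (𝓝 p) := by
  have hcauchy : CauchySeq fun n => P (x n) := by
    refine cauchySeq_of_norm_sub_sq_le (s := fun n => ‖x n - P (x n)‖ ^ 2)
      ⟨0, Set.forall_mem_range.2 fun _ => sq_nonneg _⟩ fun n m hnm => ?_
    have h := hP.norm_sub_sq_add_norm_sub_sq_le hS (x m) (hP.mem (x n))
    have := pow_le_pow_left₀ (norm_nonneg _) (hfejer _ (hP.mem (x n)) hnm) 2
    linarith
  obtain ⟨v, hv⟩ := cauchySeq_tendsto_of_complete hcauchy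
  suffices p = v from this ▸ hv
  have hlim : Tendsto (fun n => ⟪x n - P (x n), p - P (x n)⟫) atTop (𝓝 ⟪p - v, p - v⟫) := by
    have h₁ := hxp.tendsto_inner (norm_le_of_antitone_norm_sub (hfejer p hp))
      (tendsto_const_nhds (x := p) |>.sub hv)
    convert h₁.sub (hv.inner (tendsto_const_nhds (x := p) |>.sub hv)) using 1
    · ext n
      rw [inner_sub_left, real_inner_comm]
    · rw [inner_sub_left, real_inner_comm]
  have hle := le_of_tendsto' hlim fun n => hP.inner_le_zero hS (x n) hp
  exact sub_eq_zero.1 (real_inner_self_nonpos.1 hle)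

end Fejer

section Demiclosed

variable {ι : Type*} {l : Filter ι} [l.NeBot] {C : Set H} {A : H → H} {α : ℝ} {x : ι → H}
  {M : ℝ} {z g : H}

theorem IsInverseStronglyMonotoneOn.apply_eq_of_tendstoWeakly
    (hA : IsInverseStronglyMonotoneOn A C α) (hα : 0 < α) (hxC : ∀ n, x n ∈ C)
    (hM : ∀ n, ‖x n‖ ≤ M) (hz : z ∈ C) (hxz : TendstoWeakly x l z)
    (hAx : Tendsto (fun n => A (x n)) l (𝓝 g)) : A z = g := by
  have hd : Tendsto (fun n => A (x n) - A z) l (𝓝 (g - A z)) := hAx.sub_const _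
  have hinner : Tendsto (fun n => ⟪A (x n) - A z, x n - z⟫) l (𝓝 0) := by
    have := (hxz.tendsto_inner hM hd).sub (hd.inner (tendsto_const_nhds (x := z)))
    simpa only [← inner_sub_right, sub_self] using this
  have hle : α * ‖g - A z‖ ^ 2 ≤ 0 :=
    le_of_tendsto_of_tendsto' ((hd.norm.pow 2).const_mul α) hinner fun n => hA _ (hxC n) _ hz
  have : ‖g - A z‖ ^ 2 = 0 := le_antisymm (by nlinarith [sq_nonneg ‖g - A z‖]) (sq_nonneg _)
  exact (norm_sub_eq_zero_iff.1 (pow_eq_zero_iff two_ne_zero |>.1 this)).symm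

theorem mem_solutionsVI_of_tendstoWeakly [CompleteSpace H] (hC : Convex ℝ C) (hCcl : IsClosed C)
    {P : H → H} (hP : IsMetricProjection C P) (hA : IsInverseStronglyMonotoneOn A C α)
    (hα : 0 < α) {γ : ι → ℝ} {a : ℝ} (ha : 0 < a) (hγ : ∀ n, a ≤ γ n) (hxC : ∀ n, x n ∈ C)
    (hM : ∀ n, ‖x n‖ ≤ M) (hAx : Tendsto (fun n => A (x n)) l (𝓝 g))
    (hres : Tendsto (fun n => x n - P (x n - γ n • A (x n))) l (𝓝 0))
    (hxz : TendstoWeakly x l z) : z ∈ solutionsVI C A := by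
  set t := fun n => P (x n - γ n • A (x n))
  have hzC := hxz.mem_of_convex_of_isClosed hC hCcl hxC
  -- `-c n` lies in the normal cone of `C` at `t n`, and `c n → g = A z`
  set c := fun n => A (x n) - (γ n)⁻¹ • (x n - t n)
  have hc : Tendsto c l (𝓝 g) := by
    have : Tendsto (fun n => (γ n)⁻¹ • (x n - t n)) l (𝓝 0) := by
      refine squeeze_zero_norm (fun n => ?_) (by simpa using hres.norm.const_mul a⁻¹)
      rw [norm_smul, norm_inv, Real.norm_of_nonneg (ha.le.trans (hγ n))]
      exact mul_le_mul_of_nonneg_right (inv_anti₀ ha (hγ n)) (norm_nonneg _)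
    simpa using hAx.sub this
  refine ⟨hzC, fun w hw => ?_⟩
  have hnormal : ∀ n, 0 ≤ ⟪c n, w - t n⟫ := fun n => by
    have hγn : 0 < γ n := ha.trans_le (hγ n)
    have h := hP.inner_le_zero hC (x n - γ n • A (x n)) hw
    have e : x n - γ n • A (x n) - t n = -(γ n • c n) := by
      simp only [c, smul_sub, smul_inv_smul₀ hγn.ne']
      abel
    rw [e, inner_neg_left, real_inner_smul_left, neg_nonpos] at h
    exact (mul_nonneg_iff_of_pos_left hγn).1 h
  have hlim : Tendsto (fun n => ⟪c n, w - t n⟫) l (𝓝 ⟪g, w - z⟫) := by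
    convert ((hc.inner (tendsto_const_nhds (x := w))).sub (hxz.tendsto_inner hM hc)).add
      (hc.inner hres) using 1
    · ext n
      simp only [inner_sub_right, t]
      ring
    · rw [inner_zero_right, add_zero, inner_sub_right]
  rw [hA.apply_eq_of_tendstoWeakly hα hxC hM hzC hxz hAx]
  exact ge_of_tendsto' hlim hnormal

end Demiclosed

end Hilbert

theorem stmt_1_general
    {H : Type*} [NormedAddCommGroup H] [InnerProductSpace ℝ H] [CompleteSpace H]
    (C : Set H) (hCcl : IsClosed C) (hCcv : Convex ℝ C)
    (PC : H → H) (hPC : ∀ u : H, PC u ∈ C ∧ ∀ w ∈ C, ‖u - PC u‖ ≤ ‖u - w‖)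
    (α : ℝ) (hα : 0 < α) (A : H → H)
    (hA : ∀ x ∈ C, ∀ y ∈ C, ⟪A x - A y, x - y⟫ ≥ α * ‖A x - A y‖ ^ 2)
    (Ω : Set H)
    (hΩ : Ω = {x ∈ C | ∀ y ∈ C, ⟪A x, y - x⟫ ≥ 0})
    (hΩne : Ω.Nonempty)
    (a b c d : ℝ) (ha : 0 < a) (hb : b < 2 * α)
    (hc : 0 < c) (hd : d < 1)
    (lam : ℕ → ℝ) (hlam : ∀ n, lam n ∈ Set.Icc a b)
    (alp : ℕ → ℝ) (halp : ∀ n, alp n ∈ Set.Icc c d)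
    (x y : ℕ → H) (hx0 : x 0 ∈ C)
    (hy : ∀ n, y n = alp n • x n + (1 - alp n) • PC (x n - lam n • A (x n)))
    (hx : ∀ n, x (n + 1) = PC (y n - lam n • A (y n)))
    (PΩ : H → H) (hPΩ : ∀ u : H, PΩ u ∈ Ω ∧ ∀ w ∈ Ω, ‖u - PΩ u‖ ≤ ‖u - w‖) :
    ∃ p ∈ Ω,
      (∀ u : H, Tendsto (fun n => ⟪x n, u⟫) atTop (𝓝 ⟪p, u⟫)) ∧
      Tendsto (fun n => PΩ (x n)) atTop (𝓝 p) := by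
  subst hΩ
  have hP : IsMetricProjection C PC := hPC
  have hxC : ∀ n, x n ∈ C
    | 0 => hx0
    | n + 1 => hx n ▸ hP.mem _
  have hstep : ∀ q ∈ solutionsVI C A, ∀ n, ‖x (n + 1) - q‖ ^ 2
      + c * (1 - d) * ‖x n - PC (x n - lam n • A (x n))‖ ^ 2
      + (1 - d) * (a * (2 * α - b)) * ‖A (x n) - A q‖ ^ 2 ≤ ‖x n - q‖ ^ 2 := fun q hq n =>
    hx n ▸ norm_extragradient_step_sub_sq_add_le hCcv hP hA (hxC n) hq ha hb hc hd (hlam n)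
      (halp n) (hy n)
  have hK₁ : 0 < c * (1 - d) := mul_pos hc (by linarith)
  have hK₂ : 0 < (1 - d) * (a * (2 * α - b)) := mul_pos (by linarith) (mul_pos ha (by linarith))
  have hfejer : ∀ q ∈ solutionsVI C A, Antitone fun n => ‖x n - q‖ := fun q hq =>
    antitone_nat_of_succ_le fun n => by
      refine (pow_le_pow_iff_left₀ (norm_nonneg _) (norm_nonneg _) two_ne_zero).1 ?_
      nlinarith [hstep q hq n, sq_nonneg ‖x n - PC (x n - lam n • A (x n))‖,
        sq_nonneg ‖A (x n) - A q‖]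
  obtain ⟨q₀, hq₀⟩ := hΩne
  have hD := (tendsto_atTop_ciInf (hfejer q₀ hq₀)
    ⟨0, Set.forall_mem_range.2 fun _ => norm_nonneg _⟩).pow 2
  have hres : Tendsto (fun n => x n - PC (x n - lam n • A (x n))) atTop (𝓝 0) :=
    tendsto_zero_of_mul_norm_sq_le_sub_succ hD hK₁ fun n => by
      nlinarith [hstep q₀ hq₀ n, sq_nonneg ‖A (x n) - A q₀‖]
  have hAx : Tendsto (fun n => A (x n)) atTop (𝓝 (A q₀)) :=
    tendsto_sub_nhds_zero_iff.1 <| tendsto_zero_of_mul_norm_sq_le_sub_succ hD hK₂ fun n => by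
      nlinarith [hstep q₀ hq₀ n, sq_nonneg ‖x n - PC (x n - lam n • A (x n))‖]
  have hM := norm_le_of_antitone_norm_sub (hfejer q₀ hq₀)
  obtain ⟨p, hp, hxp⟩ := exists_tendstoWeakly_of_fejer ⟨q₀, hq₀⟩ hfejer fun V hV _ hz =>
    mem_solutionsVI_of_tendstoWeakly hCcv hCcl hP hA hα ha (fun n => (hlam n).1) hxC hM
      (hAx.mono_left hV) (hres.mono_left hV) hz
  exact ⟨p, hp, hxp,
    tendsto_proj_of_fejer (IsInverseStronglyMonotoneOn.convex_solutionsVI hA hα hCcv) hPΩ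
      hfejer hp hxp⟩

theorem stmt_1
    {H : Type*} [NormedAddCommGroup H] [InnerProductSpace ℝ H] [CompleteSpace H]
    (C : Set H) (hCne : C.Nonempty) (hCcl : IsClosed C) (hCcv : Convex ℝ C)
    (PC : H → H) (hPC : ∀ u : H, PC u ∈ C ∧ ∀ w ∈ C, ‖u - PC u‖ ≤ ‖u - w‖)
    (α : ℝ) (hα : 0 < α) (A : H → H)
    (hA : ∀ x ∈ C, ∀ y ∈ C, ⟪A x - A y, x - y⟫ ≥ α * ‖A x - A y‖ ^ 2)
    (Ω : Set H)
    (hΩ : Ω = {x ∈ C | ∀ y ∈ C, ⟪A x, y - x⟫ ≥ 0})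
    (hΩne : Ω.Nonempty)
    (a b c d : ℝ) (ha : 0 < a) (hab : a ≤ b) (hb : b < 2 * α)
    (hc : 0 < c) (hcd : c ≤ d) (hd : d < 1)
    (lam : ℕ → ℝ) (hlam : ∀ n, lam n ∈ Set.Icc a b)
    (alp : ℕ → ℝ) (halp : ∀ n, alp n ∈ Set.Icc c d)
    (x y : ℕ → H) (hx0 : x 0 ∈ C)
    (hy : ∀ n, y n = alp n • x n + (1 - alp n) • PC (x n - lam n • A (x n)))
    (hx : ∀ n, x (n + 1) = PC (y n - lam n • A (y n)))
    (PΩ : H → H) (hPΩ : ∀ u : H, PΩ u ∈ Ω ∧ ∀ w ∈ Ω, ‖u - PΩ u‖ ≤ ‖u - w‖) :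
    ∃ p ∈ Ω,
      (∀ u : H, Tendsto (fun n => ⟪x n, u⟫) atTop (𝓝 ⟪p, u⟫)) ∧
      Tendsto (fun n => PΩ (x n)) atTop (𝓝 p) :=
  stmt_1_general C hCcl hCcv PC hPC α hα A hA Ω hΩ hΩne a b c d ha hb hc hd lam hlam alp halp x y
    hx0 hy hx PΩ hPΩ
end

section
/- Let C be a nonempty closed convex subset of a real Hilbert space H and let {x_n} be a sequence in H such that ‖x_{n+1} − z‖ ≤ ‖x_n − z‖ for every z ∈ C and every n = 0, 1, 2, …. Then the sequence {P_C x_n} of metric projections converges strongly to some point u ∈ C. -/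
open scoped RealInnerProductSpace
open Filter Topology

/-
The distances `d n = ‖x n - P_C x n‖` decrease, since
`‖x (n+1) - P_C x (n+1)‖ ≤ ‖x (n+1) - P_C x n‖ ≤ ‖x n - P_C x n‖`.
For `n ≤ m`, the parallelogram law at `x m`, applied to its nearest point `P_C x m` and to the point
`P_C x n ∈ C`, which is at distance at most `d n` from `x m` by Fejér monotonicity, gives
`‖P_C x n - P_C x m‖² ≤ 2 d n² - 2 d m²`. As `d n` converges, `P_C x n` is Cauchy, and its limit lies in `C`.
-/

theorem Convex.norm_sub_sq_le_of_forall_norm_le {E : Type*} [NormedAddCommGroup E]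
    [InnerProductSpace ℝ E] {C : Set E} (hC : Convex ℝ C) {a p q : E} (hp : p ∈ C) (hq : q ∈ C)
    (hmin : ∀ w ∈ C, ‖a - p‖ ≤ ‖a - w‖) :
    ‖q - p‖ ^ 2 ≤ 2 * ‖a - q‖ ^ 2 - 2 * ‖a - p‖ ^ 2 := by
  set mid : E := (1 / 2 : ℝ) • p + (1 / 2 : ℝ) • q
  have hmid : ‖a - p‖ ≤ ‖a - mid‖ := hmin mid (hC hp hq (by norm_num) (by norm_num) (by norm_num))
  have hpar := parallelogram_law_with_norm ℝ (a - p) (a - q)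
  rw [show (a - p) + (a - q) = (2 : ℝ) • (a - mid) by module,
    show (a - p) - (a - q) = q - p by abel, norm_smul, Real.norm_ofNat] at hpar
  nlinarith [norm_nonneg (a - p)]

theorem cauchySeq_of_dist_sq_le_sub {α : Type*} [PseudoMetricSpace α] {f : ℕ → α} {s : ℕ → ℝ}
    (hs : CauchySeq s) (hf : ∀ n m, n ≤ m → dist (f n) (f m) ^ 2 ≤ s n - s m) :
    CauchySeq f := by
  rw [Metric.cauchySeq_iff'] at hs ⊢
  intro ε hε
  obtain ⟨N, hN⟩ := hs (ε ^ 2) (by positivity)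
  refine ⟨N, fun n hn => ?_⟩
  have hsq : dist (f n) (f N) ^ 2 < ε ^ 2 := by
    rw [dist_comm]
    calc dist (f N) (f n) ^ 2 ≤ s N - s n := hf N n hn
      _ ≤ |s n - s N| := by rw [abs_sub_comm]; exact le_abs_self _
      _ = dist (s n) (s N) := (Real.dist_eq _ _).symm
      _ < ε ^ 2 := hN n hn
  exact lt_of_pow_lt_pow_left₀ 2 hε.le hsq

theorem stmt_6_general
    {H : Type*} [NormedAddCommGroup H] [InnerProductSpace ℝ H] [CompleteSpace H]
    (C : Set H) (hCcl : IsClosed C) (hCcv : Convex ℝ C)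
    (PC : H → H) (hPC : ∀ u : H, PC u ∈ C ∧ ∀ w ∈ C, ‖u - PC u‖ ≤ ‖u - w‖)
    (x : ℕ → H)
    (hfejer : ∀ z ∈ C, ∀ n : ℕ, ‖x (n + 1) - z‖ ≤ ‖x n - z‖) :
    ∃ u ∈ C, Tendsto (fun n => PC (x n)) atTop (𝓝 u) := by
  set d : ℕ → ℝ := fun n => ‖x n - PC (x n)‖
  have hdist_anti : ∀ z ∈ C, Antitone fun n => ‖x n - z‖ := fun z hz =>
    antitone_nat_of_succ_le (hfejer z hz)
  have hd_anti : Antitone d := antitone_nat_of_succ_le fun n =>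
    ((hPC _).2 _ (hPC (x n)).1).trans (hfejer _ (hPC (x n)).1 n)
  have hd_lim : Tendsto d atTop (𝓝 (⨅ n, d n)) :=
    tendsto_atTop_ciInf hd_anti ⟨0, by rintro _ ⟨n, rfl⟩; exact norm_nonneg _⟩
  have hstep : ∀ n m, n ≤ m →
      dist (PC (x n)) (PC (x m)) ^ 2 ≤ 2 * d n ^ 2 - 2 * d m ^ 2 := by
    intro n m hnm
    have hq : ‖x m - PC (x n)‖ ≤ d n := hdist_anti _ (hPC (x n)).1 hnm
    have hkey := hCcv.norm_sub_sq_le_of_forall_norm_le (hPC (x m)).1 (hPC (x n)).1 (hPC (x m)).2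
    rw [dist_eq_norm]
    nlinarith [norm_nonneg (x m - PC (x n))]
  obtain ⟨u, hu⟩ := cauchySeq_tendsto_of_complete <|
    cauchySeq_of_dist_sq_le_sub ((hd_lim.pow 2).const_mul 2).cauchySeq hstep
  exact ⟨u, hCcl.mem_of_tendsto hu (Eventually.of_forall fun n => (hPC (x n)).1), hu⟩

theorem stmt_6
    {H : Type*} [NormedAddCommGroup H] [InnerProductSpace ℝ H] [CompleteSpace H]
    (C : Set H) (hCne : C.Nonempty) (hCcl : IsClosed C) (hCcv : Convex ℝ C)
    (PC : H → H) (hPC : ∀ u : H, PC u ∈ C ∧ ∀ w ∈ C, ‖u - PC u‖ ≤ ‖u - w‖)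
    (x : ℕ → H)
    (hfejer : ∀ z ∈ C, ∀ n : ℕ, ‖x (n + 1) - z‖ ≤ ‖x n - z‖) :
    ∃ u ∈ C, Tendsto (fun n => PC (x n)) atTop (𝓝 u) :=
  stmt_6_general C hCcl hCcv PC hPC x hfejer
end

section
/- Let C be a nonempty bounded closed convex subset of a real Hilbert space H and let A : C → H be an α-inverse strongly monotone mapping (α > 0). Then the solution set Ω of the variational inequality VI(C, A) is nonempty: there exists x ∈ C such that ⟨Ax, y − x⟩ ≥ 0 for all y ∈ C. -/
open scoped RealInnerProductSpace
open Filter Topology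

/-
Replacing `A` by the regularized map `w ↦ (1 - t)(w - α A w) + t u` (with `u ∈ C` fixed) turns
`P_C ∘ (…)` into a contraction, because `I - α A` is nonexpansive on `C`; its fixed point solves
the Minty inequality `⟪A y, y - x⟫ ≥ 0` up to an error `O(t)`, by monotonicity of `A`.
The sets of `ε`-approximate Minty points are nested, nonempty, closed and convex, hence weakly
compact (Banach–Alaoglu through the Riesz isomorphism), so they have a common point `x`.
Since `A` is continuous on `C`, testing the Minty inequality at `x + t (y - x)` and letting
`t → 0` shows that `x` solves `VI(C, A)`.
-/

theorem Convex.isClosed_toWeakSpace_image {E : Type*} [NormedAddCommGroup E] [NormedSpace ℝ E]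
    {s : Set E} (hs : Convex ℝ s) (hcl : IsClosed s) : IsClosed (toWeakSpace ℝ E '' s) := by
  rw [← closure_eq_iff_isClosed, ← hs.toWeakSpace_closure ℝ, hcl.closure_eq]

section

variable {H : Type*} [NormedAddCommGroup H] [InnerProductSpace ℝ H]

theorem norm_sub_le_of_real_inner_sub_nonpos {u v p q : H} (hp : ⟪u - p, q - p⟫ ≤ 0)
    (hq : ⟪v - q, p - q⟫ ≤ 0) : ‖p - q‖ ≤ ‖u - v‖ := by
  have hp' : ⟪u - p, p - q⟫ = -⟪u - p, q - p⟫ := by rw [← inner_neg_right, neg_sub]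
  have hsq : ‖p - q‖ ^ 2 ≤ ⟪u - v, p - q⟫ := by
    rw [show u - v = (p - q) + (u - p) - (v - q) by abel, inner_sub_left, inner_add_left,
      real_inner_self_eq_norm_sq, hp']
    linarith
  nlinarith [real_inner_le_norm (u - v) (p - q), norm_nonneg (p - q), norm_nonneg (u - v)]

theorem Convex.real_inner_sub_nonneg_of_minty {C : Set H} (hcv : Convex ℝ C) {A : H → H}
    (hA : ContinuousOn A C) {x : H} (hx : x ∈ C) (hminty : ∀ y ∈ C, 0 ≤ ⟪A y, y - x⟫)
    {y : H} (hy : y ∈ C) : 0 ≤ ⟪A x, y - x⟫ := by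
  set γ : ℝ → H := fun t => x + t • (y - x)
  have hγC : ∀ᶠ t in 𝓝[>] 0, γ t ∈ C := by
    filter_upwards [Ioc_mem_nhdsGT one_pos] with t ht
    exact hcv.add_smul_sub_mem hx hy ⟨ht.1.le, ht.2⟩
  have hγ : Tendsto γ (𝓝[>] 0) (𝓝[C] x) := by
    refine tendsto_nhdsWithin_iff.2 ⟨?_, hγC⟩
    have : Continuous γ := by fun_prop
    simpa [γ] using this.continuousWithinAt.tendsto (x := 0) (s := Set.Ioi 0)
  refine ge_of_tendsto (((hA x hx).tendsto.comp hγ).inner tendsto_const_nhds) ?_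
  filter_upwards [hγC, self_mem_nhdsWithin] with t htC (ht : 0 < t)
  have := hminty (γ t) htC
  rwa [show γ t - x = t • (y - x) by simp [γ], real_inner_smul_right,
    mul_nonneg_iff_of_pos_left ht] at this

def InverseStronglyMonotoneOn (α : ℝ) (A : H → H) (C : Set H) : Prop :=
  ∀ x ∈ C, ∀ y ∈ C, α * ‖A x - A y‖ ^ 2 ≤ ⟪A x - A y, x - y⟫

namespace InverseStronglyMonotoneOn

variable {α : ℝ} {A : H → H} {C : Set H} {x y : H}

theorem real_inner_sub_nonneg (hA : InverseStronglyMonotoneOn α A C) (hα : 0 ≤ α)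
    (hx : x ∈ C) (hy : y ∈ C) : 0 ≤ ⟪A x - A y, x - y⟫ :=
  (mul_nonneg hα (sq_nonneg _)).trans (hA x hx y hy)

theorem mul_norm_sub_le (hA : InverseStronglyMonotoneOn α A C) (hx : x ∈ C) (hy : y ∈ C) :
    α * ‖A x - A y‖ ≤ ‖x - y‖ := by
  rcases (norm_nonneg (A x - A y)).eq_or_lt with h | h
  · simp [← h]
  · have := (hA x hx y hy).trans (real_inner_le_norm _ _)
    rw [sq, ← mul_assoc, mul_comm ‖A x - A y‖ ‖x - y‖] at this
    exact le_of_mul_le_mul_right this h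

theorem lipschitzOnWith (hA : InverseStronglyMonotoneOn α A C) (hα : 0 < α) :
    LipschitzOnWith (Real.toNNReal α⁻¹) A C :=
  LipschitzOnWith.of_dist_le_mul fun x hx y hy => by
    rw [dist_eq_norm, dist_eq_norm, Real.coe_toNNReal _ (inv_nonneg.2 hα.le), ← div_eq_inv_mul,
      le_div_iff₀' hα]
    exact hA.mul_norm_sub_le hx hy

theorem norm_sub_smul_sub_le (hA : InverseStronglyMonotoneOn α A C) (hα : 0 ≤ α)
    (hx : x ∈ C) (hy : y ∈ C) : ‖(x - α • A x) - (y - α • A y)‖ ≤ ‖x - y‖ := by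
  rw [show (x - α • A x) - (y - α • A y) = (x - y) - α • (A x - A y) by module,
    ← sq_le_sq₀ (norm_nonneg _) (norm_nonneg _), norm_sub_sq_real, real_inner_smul_right,
    norm_smul, Real.norm_of_nonneg hα, real_inner_comm]
  nlinarith [hA x hx y hy]

end InverseStronglyMonotoneOn

end

section Complete

variable {H : Type*} [NormedAddCommGroup H] [InnerProductSpace ℝ H] [CompleteSpace H]

open InnerProductSpace in
theorem continuous_toWeakSpace_toDual_symm :
    Continuous fun φ : WeakDual ℝ H =>
      toWeakSpace ℝ H ((toDual ℝ H).symm (WeakDual.toStrongDual φ)) := by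
  refine WeakBilin.continuous_of_continuous_eval _ fun f => ?_
  convert WeakDual.eval_continuous ((toDual ℝ H).symm f) using 2 with φ
  change f ((toDual ℝ H).symm (WeakDual.toStrongDual φ)) = φ ((toDual ℝ H).symm f)
  rw [← toDual_symm_apply, real_inner_comm, toDual_symm_apply]
  rfl

theorem isCompact_toWeakSpace_image {C : Set H} (hcl : IsClosed C) (hcv : Convex ℝ C)
    (hbd : Bornology.IsBounded C) : IsCompact (toWeakSpace ℝ H '' C) := by
  set g : WeakDual ℝ H → WeakSpace ℝ H :=
    fun φ => toWeakSpace ℝ H ((InnerProductSpace.toDual ℝ H).symm (WeakDual.toStrongDual φ))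
  have hg : g.Surjective := fun z =>
    ⟨StrongDual.toWeakDual (InnerProductSpace.toDual ℝ H ((toWeakSpace ℝ H).symm z)), by simp [g]⟩
  rw [← Set.image_preimage_eq (toWeakSpace ℝ H '' C) hg]
  refine IsCompact.image (WeakDual.isCompact_of_bounded_of_closed ?_ ?_)
    continuous_toWeakSpace_toDual_symm
  · rw [← WeakDual.isBounded_toWeakDual_preimage_iff_isBounded]
    convert (InnerProductSpace.toDual ℝ H).lipschitz.isBounded_image hbd using 1
    rw [LinearIsometryEquiv.image_eq_preimage_symm]
    ext f
    simp [g]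
  · exact (hcv.isClosed_toWeakSpace_image hcl).preimage continuous_toWeakSpace_toDual_symm

theorem nonempty_iInter_of_isClosed_of_convex {K : ℕ → Set H}
    (hanti : ∀ n, K (n + 1) ⊆ K n) (hne : ∀ n, (K n).Nonempty) (hcl : ∀ n, IsClosed (K n))
    (hcv : ∀ n, Convex ℝ (K n)) (hbd : Bornology.IsBounded (K 0)) : (⋂ n, K n).Nonempty := by
  have hweak : (⋂ n, toWeakSpace ℝ H '' K n).Nonempty :=
    IsCompact.nonempty_iInter_of_sequence_nonempty_isCompact_isClosed _
      (fun n => Set.image_mono (hanti n)) (fun n => (hne n).image _)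
      (isCompact_toWeakSpace_image (hcl 0) (hcv 0) hbd)
      (fun n => (hcv n).isClosed_toWeakSpace_image (hcl n))
  rwa [← Set.image_iInter (toWeakSpace ℝ H).bijective, Set.image_nonempty] at hweak

/-- The conclusion says that `x` is a fixed point of `P_C ∘ S`, with `P_C` the metric projection
onto `C`. -/
theorem LipschitzOnWith.exists_projection_fixedPoint {C : Set H} (hne : C.Nonempty)
    (hcl : IsClosed C) (hcv : Convex ℝ C) {S : H → H} {K : NNReal} (hK : K < 1)
    (hS : LipschitzOnWith K S C) : ∃ x ∈ C, ∀ y ∈ C, ⟪S x - x, y - x⟫ ≤ 0 := by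
  have hproj : ∀ u, ∃ p ∈ C, ∀ y ∈ C, ⟪u - p, y - p⟫ ≤ 0 := fun u => by
    obtain ⟨p, hpC, hp⟩ := exists_norm_eq_iInf_of_complete_convex hne hcl.isComplete hcv u
    exact ⟨p, hpC, (norm_eq_iInf_iff_real_inner_le_zero hcv hpC).1 hp⟩
  choose P hPC hP using hproj
  have := hne.to_subtype
  have : CompleteSpace C := hcl.completeSpace_coe
  set g : C → C := fun x => ⟨P (S x), hPC _⟩
  have hg : ContractingWith K g := ⟨hK, LipschitzWith.of_dist_le_mul fun x y => by
    rw [Subtype.dist_eq, Subtype.dist_eq, dist_eq_norm, dist_eq_norm]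
    exact (norm_sub_le_of_real_inner_sub_nonpos (hP _ _ (hPC _)) (hP _ _ (hPC _))).trans
      (dist_eq_norm (S x) (S y) ▸ dist_eq_norm (x : H) y ▸ hS.dist_le_mul x x.2 y y.2)⟩
  set x := ContractingWith.fixedPoint g hg
  have hPx : P (S x) = x := congrArg Subtype.val hg.fixedPoint_isFixedPt
  refine ⟨x, x.2, fun y hy => ?_⟩
  have := hP (S x) y hy
  rwa [hPx] at this

namespace InverseStronglyMonotoneOn

variable {α : ℝ} {A : H → H} {C : Set H}

theorem exists_regularized_solution (hA : InverseStronglyMonotoneOn α A C) (hα : 0 ≤ α)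
    (hne : C.Nonempty) (hcl : IsClosed C) (hcv : Convex ℝ C) (u : H) {t : ℝ} (ht0 : 0 < t)
    (ht1 : t ≤ 1) : ∃ x ∈ C, ∀ y ∈ C, t * ⟪u - x, y - x⟫ ≤ (1 - t) * α * ⟪A x, y - x⟫ := by
  set S : H → H := fun w => (1 - t) • (w - α • A w) + t • u
  have hS : LipschitzOnWith (Real.toNNReal (1 - t)) S C :=
    LipschitzOnWith.of_dist_le_mul fun x hx y hy => by
      rw [dist_eq_norm, dist_eq_norm, Real.coe_toNNReal _ (sub_nonneg.2 ht1),
        show S x - S y = (1 - t) • ((x - α • A x) - (y - α • A y)) by module, norm_smul,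
        Real.norm_of_nonneg (sub_nonneg.2 ht1)]
      exact mul_le_mul_of_nonneg_left (hA.norm_sub_smul_sub_le hα hx hy) (sub_nonneg.2 ht1)
  obtain ⟨x, hxC, hx⟩ :=
    hS.exists_projection_fixedPoint hne hcl hcv (Real.toNNReal_lt_one.2 (by linarith))
  refine ⟨x, hxC, fun y hy => ?_⟩
  have := hx y hy
  rw [show S x - x = t • (u - x) - ((1 - t) * α) • A x by module, inner_sub_left,
    real_inner_smul_left, real_inner_smul_left] at this
  linarith

theorem exists_approx_minty (hA : InverseStronglyMonotoneOn α A C) (hα : 0 < α)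
    (hne : C.Nonempty) (hcl : IsClosed C) (hcv : Convex ℝ C) (hbd : Bornology.IsBounded C)
    {ε : ℝ} (hε : 0 < ε) : ∃ x ∈ C, ∀ y ∈ C, -ε ≤ ⟪A y, y - x⟫ := by
  obtain ⟨u, hu⟩ := hne
  obtain ⟨D, hD⟩ := Metric.isBounded_iff.1 hbd
  set t := α * ε / (α * ε + D ^ 2 + 1)
  have hden : 0 < α * ε + D ^ 2 + 1 := by positivity
  have ht0 : 0 < t := by positivity
  have ht1 : t < 1 := (div_lt_one hden).2 (by nlinarith [sq_nonneg D])
  have ht : (1 - t) * α * ε = t * (D ^ 2 + 1) := by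
    simp only [t]; field_simp; ring
  obtain ⟨x, hxC, hx⟩ := hA.exists_regularized_solution hα.le ⟨u, hu⟩ hcl hcv u ht0 ht1.le
  refine ⟨x, hxC, fun y hy => ?_⟩
  have hux : -(D ^ 2) ≤ ⟪u - x, y - x⟫ := by
    have h1 := neg_le_of_abs_le (abs_real_inner_le_norm (u - x) (y - x))
    have h2 := mul_le_mul (dist_eq_norm u x ▸ hD hu hxC) (dist_eq_norm y x ▸ hD hy hxC)
      (norm_nonneg _) ((norm_nonneg _).trans (dist_eq_norm u x ▸ hD hu hxC))
    nlinarith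
  have hmono : ⟪A x, y - x⟫ ≤ ⟪A y, y - x⟫ := by
    have := hA.real_inner_sub_nonneg hα.le hy hxC
    rw [inner_sub_left] at this
    linarith
  have hpos : 0 < (1 - t) * α := mul_pos (by linarith) hα
  have : t ≤ (1 - t) * α * (⟪A y, y - x⟫ + ε) := by
    nlinarith [hx y hy, mul_le_mul_of_nonneg_left hmono hpos.le,
      mul_le_mul_of_nonneg_left hux ht0.le]
  nlinarith

theorem exists_minty_solution (hA : InverseStronglyMonotoneOn α A C) (hα : 0 < α)
    (hne : C.Nonempty) (hcl : IsClosed C) (hcv : Convex ℝ C) (hbd : Bornology.IsBounded C) :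
    ∃ x ∈ C, ∀ y ∈ C, 0 ≤ ⟪A y, y - x⟫ := by
  set K : ℕ → Set H := fun n => C ∩ ⋂ y ∈ C, {x | ⟪A y, x⟫ ≤ ⟪A y, y⟫ + 1 / (n + 1)}
  have hK : ∀ n x, x ∈ K n ↔ x ∈ C ∧ ∀ y ∈ C, -(1 / ((n : ℝ) + 1)) ≤ ⟪A y, y - x⟫ := by
    intro n x
    simp only [K, Set.mem_inter_iff, Set.mem_iInter, Set.mem_ofPred_eq, inner_sub_right]
    refine and_congr_right fun _ => forall₂_congr fun y _ => ?_
    constructor <;> intro h <;> linarith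
  obtain ⟨x, hx⟩ := nonempty_iInter_of_isClosed_of_convex (K := K)
    (fun n x hx => by
      rw [hK] at hx ⊢
      refine ⟨hx.1, fun y hy => le_trans (neg_le_neg ?_) (hx.2 y hy)⟩
      gcongr
      linarith)
    (fun n => by
      obtain ⟨x, hxC, hx⟩ := hA.exists_approx_minty hα hne hcl hcv hbd (ε := 1 / (n + 1))
        (by positivity)
      exact ⟨x, (hK n x).2 ⟨hxC, hx⟩⟩)
    (fun n => hcl.inter (isClosed_biInter fun y _ =>
      isClosed_le (continuous_const.inner continuous_id) continuous_const))
    (fun n => hcv.inter (convex_iInter₂ fun y _ =>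
      convex_halfSpace_le (innerₛₗ ℝ (A y)).isLinear _))
    (hbd.subset Set.inter_subset_left)
  have hx : ∀ n, x ∈ K n := Set.mem_iInter.1 hx
  have hlim : Tendsto (fun n : ℕ => -(1 / ((n : ℝ) + 1))) atTop (𝓝 0) := by
    simpa only [neg_zero] using (tendsto_one_div_add_atTop_nhds_zero_nat (𝕜 := ℝ)).neg
  exact ⟨x, ((hK 0 x).1 (hx 0)).1, fun y hy =>
    le_of_tendsto' hlim fun n => ((hK n x).1 (hx n)).2 y hy⟩

end InverseStronglyMonotoneOn

end Complete

theorem stmt_7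
    {H : Type*} [NormedAddCommGroup H] [InnerProductSpace ℝ H] [CompleteSpace H]
    (C : Set H) (hCne : C.Nonempty) (hCcl : IsClosed C) (hCcv : Convex ℝ C) (hCbd : Bornology.IsBounded C)
    (α : ℝ) (hα : 0 < α) (A : H → H)
    (hA : ∀ x ∈ C, ∀ y ∈ C, ⟪A x - A y, x - y⟫ ≥ α * ‖A x - A y‖ ^ 2) :
    ∃ x ∈ C, ∀ y ∈ C, ⟪A x, y - x⟫ ≥ 0 := by
  have hISM : InverseStronglyMonotoneOn α A C := hA
  obtain ⟨x, hxC, hminty⟩ := hISM.exists_minty_solution hα hCne hCcl hCcv hCbd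
  exact ⟨x, hxC, fun y hy =>
    hCcv.real_inner_sub_nonneg_of_minty (hISM.lipschitzOnWith hα).continuousOn hxC hminty hy⟩
end

section
/- Let C be a nonempty closed convex subset of a real Hilbert space H, A : C → H an α-inverse strongly monotone mapping (α > 0), T : C → C nonexpansive with F = F(T) ∩ Ω ≠ ∅, {λ_n} ⊂ [a, b] ⊂ (0, 2α), {α_n} ⊂ [c, d] ⊂ (0, 1), and let {x_n}, {y_n} be generated from x₀ ∈ C by y_n = α_n x_n + (1 − α_n) T P_C(x_n − λ_n A x_n), x_{n+1} = T P_C(y_n − λ_n A y_n). Then for every z ∈ F and every n, ‖x_{n+1} − z‖² ≤ ‖x_n − z‖² + (1 − α_n) λ_n (λ_n − 2α) ‖Ax_n − Az‖² ≤ ‖x_n − z‖²; in particular the sequence {‖x_n − z‖} is nonincreasing. -/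
open scoped RealInnerProductSpace
open Filter Topology

set_option maxHeartbeats 1000000 in
theorem stmt_11
    {H : Type*} [NormedAddCommGroup H] [InnerProductSpace ℝ H] [CompleteSpace H]
    (C : Set H) (hCne : C.Nonempty) (hCcl : IsClosed C) (hCcv : Convex ℝ C)
    (PC : H → H) (hPC : ∀ u : H, PC u ∈ C ∧ ∀ w ∈ C, ‖u - PC u‖ ≤ ‖u - w‖)
    (α : ℝ) (hα : 0 < α) (A : H → H)
    (hA : ∀ x ∈ C, ∀ y ∈ C, ⟪A x - A y, x - y⟫ ≥ α * ‖A x - A y‖ ^ 2)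
    (T : H → H) (hTmaps : Set.MapsTo T C C)
    (hT : ∀ x ∈ C, ∀ y ∈ C, ‖T x - T y‖ ≤ ‖x - y‖)
    (F : Set H)
    (hF : F = {x ∈ C | T x = x} ∩ {x ∈ C | ∀ y ∈ C, ⟪A x, y - x⟫ ≥ 0})
    (hFne : F.Nonempty)
    (a b c d : ℝ) (ha : 0 < a) (hab : a ≤ b) (hb : b < 2 * α)
    (hc : 0 < c) (hcd : c ≤ d) (hd : d < 1)
    (lam : ℕ → ℝ) (hlam : ∀ n, lam n ∈ Set.Icc a b)
    (alp : ℕ → ℝ) (halp : ∀ n, alp n ∈ Set.Icc c d)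
    (x y : ℕ → H) (hx0 : x 0 ∈ C)
    (hy : ∀ n, y n = alp n • x n + (1 - alp n) • T (PC (x n - lam n • A (x n))))
    (hx : ∀ n, x (n + 1) = T (PC (y n - lam n • A (y n)))) :
    ∀ z ∈ F, ∀ n : ℕ,
      (‖x (n + 1) - z‖ ^ 2
          ≤ ‖x n - z‖ ^ 2 + (1 - alp n) * lam n * (lam n - 2 * α) * ‖A (x n) - A z‖ ^ 2 ∧
        ‖x n - z‖ ^ 2 + (1 - alp n) * lam n * (lam n - 2 * α) * ‖A (x n) - A z‖ ^ 2
          ≤ ‖x n - z‖ ^ 2) ∧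
      ‖x (n + 1) - z‖ ≤ ‖x n - z‖ := by
  have hPCmem : ∀ u, PC u ∈ C := fun u => (hPC u).1
  haveI : Nonempty C := hCne.to_subtype
  -- projection characterization
  have hchar : ∀ u : H, ∀ w ∈ C, ⟪u - PC u, w - PC u⟫ ≤ 0 := by
    intro u
    have h1 : ‖u - PC u‖ = ⨅ w : C, ‖u - w‖ := by
      apply le_antisymm
      · exact le_ciInf fun w => (hPC u).2 w w.2
      · have hbdd : BddBelow (Set.range fun w : C => ‖u - w‖) :=
          ⟨0, by rintro r ⟨w, rfl⟩; exact norm_nonneg _⟩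
        exact ciInf_le hbdd ⟨PC u, hPCmem u⟩
    exact (norm_eq_iInf_iff_real_inner_le_zero hCcv (hPCmem u)).1 h1
  -- nonexpansiveness of PC
  have hPCne : ∀ u v : H, ‖PC u - PC v‖ ≤ ‖u - v‖ := by
    intro u v
    have h1 := hchar u (PC v) (hPCmem v)
    have h2 := hchar v (PC u) (hPCmem u)
    have key : ‖PC u - PC v‖ ^ 2 ≤ ⟪u - v, PC u - PC v⟫ := by
      have e1 : ⟪u - PC u, PC v - PC u⟫ = ⟪u, PC v - PC u⟫ - ⟪PC u, PC v - PC u⟫ := by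
        rw [inner_sub_left]
      have e2 : ⟪v - PC v, PC u - PC v⟫ = ⟪v, PC u - PC v⟫ - ⟪PC v, PC u - PC v⟫ := by
        rw [inner_sub_left]
      have e3 : ⟪u - v, PC u - PC v⟫ = ⟪u, PC u - PC v⟫ - ⟪v, PC u - PC v⟫ := by
        rw [inner_sub_left]
      have e4 : ‖PC u - PC v‖ ^ 2 = ⟪PC u, PC u - PC v⟫ - ⟪PC v, PC u - PC v⟫ := by
        rw [← real_inner_self_eq_norm_sq, inner_sub_left]
      have e5 : ⟪u, PC v - PC u⟫ = -⟪u, PC u - PC v⟫ := by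
        rw [← inner_neg_right]; congr 1; abel
      have e6 : ⟪PC u, PC v - PC u⟫ = -⟪PC u, PC u - PC v⟫ := by
        rw [← inner_neg_right]; congr 1; abel
      rw [e1, e5, e6] at h1
      rw [e2] at h2
      rw [e3, e4]
      linarith
    have cs : ⟪u - v, PC u - PC v⟫ ≤ ‖u - v‖ * ‖PC u - PC v‖ := real_inner_le_norm _ _
    nlinarith [norm_nonneg (PC u - PC v), norm_nonneg (u - v)]
  -- membership of iterates
  have hxC : ∀ n, x n ∈ C := by
    intro n
    induction n with
    | zero => exact hx0
    | succ n _ => rw [hx n]; exact hTmaps (hPCmem _)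
  -- contraction estimate for I - l•A
  have hcontr : ∀ p ∈ C, ∀ q ∈ C, ∀ l : ℝ, 0 ≤ l →
      ‖(p - l • A p) - (q - l • A q)‖ ^ 2 ≤ ‖p - q‖ ^ 2 + l * (l - 2 * α) * ‖A p - A q‖ ^ 2 := by
    intro p hp q hq l hl
    have hmono := hA p hp q hq
    have expand : (p - l • A p) - (q - l • A q) = (p - q) - l • (A p - A q) := by
      rw [smul_sub]; abel
    rw [expand]
    have e : ‖(p - q) - l • (A p - A q)‖ ^ 2
        = ‖p - q‖ ^ 2 - 2 * (l * ⟪A p - A q, p - q⟫) + l ^ 2 * ‖A p - A q‖ ^ 2 := by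
      rw [norm_sub_sq_real, real_inner_smul_right, norm_smul, real_inner_comm]
      rw [mul_pow, Real.norm_eq_abs, sq_abs]
    rw [e]
    nlinarith [sq_nonneg ‖A p - A q‖]
  intro z hz
  rw [hF] at hz
  simp only [Set.mem_inter_iff, Set.mem_setOf_eq] at hz
  obtain ⟨⟨hzC, hzT⟩, -, hzVI⟩ := hz
  -- fixed point of projected gradient at z
  have hfix : ∀ l : ℝ, 0 ≤ l → PC (z - l • A z) = z := by
    intro l hl
    set u := z - l • A z with hu
    have h1 := hchar u z hzC
    have h2 : ⟪u - z, PC u - z⟫ ≤ 0 := by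
      have : u - z = -(l • A z) := by rw [hu]; abel
      rw [this, inner_neg_left, real_inner_smul_left]
      have hvi := hzVI (PC u) (hPCmem u)
      nlinarith [mul_nonneg hl hvi]
    have e : ⟪u - z, PC u - z⟫ + ⟪u - PC u, z - PC u⟫ = ‖z - PC u‖ ^ 2 := by
      rw [← real_inner_self_eq_norm_sq]
      simp only [inner_sub_left, inner_sub_right]
      rw [real_inner_comm z (PC u)]
      ring
    have hn : ‖z - PC u‖ ^ 2 ≤ 0 := by linarith
    have : z - PC u = 0 := by
      have := norm_nonneg (z - PC u)
      have h0 : ‖z - PC u‖ = 0 := by nlinarith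
      exact norm_eq_zero.mp h0
    have : z = PC u := sub_eq_zero.mp this
    exact this.symm
  -- generic bound for T ∘ PC
  have hTP : ∀ l : ℝ, 0 ≤ l → ∀ p : H, ‖T (PC p) - z‖ ≤ ‖p - (z - l • A z)‖ := by
    intro l hl p
    have h1 : ‖T (PC p) - T (PC (z - l • A z))‖ ≤ ‖PC p - PC (z - l • A z)‖ :=
      hT _ (hPCmem _) _ (hPCmem _)
    have h2 : ‖PC p - PC (z - l • A z)‖ ≤ ‖p - (z - l • A z)‖ := hPCne _ _
    rw [hfix l hl, hzT] at h1
    rw [hfix l hl] at h2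
    linarith
  intro n
  obtain ⟨hl1, hl2⟩ := hlam n
  obtain ⟨ha1, ha2⟩ := halp n
  set l := lam n with hldef
  set an := alp n with handef
  have hl0 : 0 ≤ l := le_of_lt (lt_of_lt_of_le ha hl1)
  set t := T (PC (x n - l • A (x n))) with htdef
  have htC : t ∈ C := hTmaps (hPCmem _)
  -- bound on t
  have ht1 : ‖t - z‖ ^ 2 ≤ ‖x n - z‖ ^ 2 + l * (l - 2 * α) * ‖A (x n) - A z‖ ^ 2 := by
    have h1 : ‖t - z‖ ≤ ‖(x n - l • A (x n)) - (z - l • A z)‖ := hTP l hl0 _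
    have h2 := hcontr (x n) (hxC n) z hzC l hl0
    nlinarith [norm_nonneg (t - z), norm_nonneg ((x n - l • A (x n)) - (z - l • A z))]
  -- bound on y n
  have hyC : y n ∈ C := by
    rw [hy n]
    exact hCcv (hxC n) htC (by linarith) (by linarith) (by ring)
  have hy1 : ‖y n - z‖ ^ 2 ≤ ‖x n - z‖ ^ 2 + (1 - an) * l * (l - 2 * α) * ‖A (x n) - A z‖ ^ 2 := by
    have hyz : y n - z = an • (x n - z) + (1 - an) • (t - z) := by
      rw [hy n, ← hldef, ← handef, ← htdef]
      module
    have htri : ‖y n - z‖ ≤ an * ‖x n - z‖ + (1 - an) * ‖t - z‖ := by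
      rw [hyz]
      calc ‖an • (x n - z) + (1 - an) • (t - z)‖
          ≤ ‖an • (x n - z)‖ + ‖(1 - an) • (t - z)‖ := norm_add_le _ _
        _ = an * ‖x n - z‖ + (1 - an) * ‖t - z‖ := by
            rw [norm_smul, norm_smul, Real.norm_eq_abs, Real.norm_eq_abs,
              abs_of_nonneg (by linarith : (0:ℝ) ≤ an), abs_of_nonneg (by linarith : (0:ℝ) ≤ 1 - an)]
    have han0 : (0:ℝ) ≤ an := by linarith
    have han1 : (0:ℝ) ≤ 1 - an := by linarith
    have hsq : ‖y n - z‖ ^ 2 ≤ (an * ‖x n - z‖ + (1 - an) * ‖t - z‖) ^ 2 :=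
      pow_le_pow_left₀ (norm_nonneg _) htri 2
    have hcv : (an * ‖x n - z‖ + (1 - an) * ‖t - z‖) ^ 2
        ≤ an * ‖x n - z‖ ^ 2 + (1 - an) * ‖t - z‖ ^ 2 := by
      nlinarith [mul_nonneg (mul_nonneg han0 han1) (sq_nonneg (‖x n - z‖ - ‖t - z‖))]
    have hm := mul_le_mul_of_nonneg_left ht1 han1
    nlinarith
  -- bound on x (n+1)
  have hx1 : ‖x (n + 1) - z‖ ^ 2 ≤ ‖y n - z‖ ^ 2 := by
    have h1 : ‖x (n + 1) - z‖ ≤ ‖(y n - l • A (y n)) - (z - l • A z)‖ := by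
      rw [hx n, ← hldef]; exact hTP l hl0 _
    have h2 := hcontr (y n) hyC z hzC l hl0
    nlinarith [norm_nonneg (x (n + 1) - z), norm_nonneg ((y n - l • A (y n)) - (z - l • A z)),
      mul_nonneg hl0 (sq_nonneg ‖A (y n) - A z‖), sq_nonneg ‖A (y n) - A z‖,
      mul_nonneg (mul_nonneg hl0 (by linarith : (0:ℝ) ≤ 2 * α - l)) (sq_nonneg ‖A (y n) - A z‖)]
  have main : ‖x (n + 1) - z‖ ^ 2
      ≤ ‖x n - z‖ ^ 2 + (1 - an) * l * (l - 2 * α) * ‖A (x n) - A z‖ ^ 2 := le_trans hx1 hy1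
  have neg : ‖x n - z‖ ^ 2 + (1 - an) * l * (l - 2 * α) * ‖A (x n) - A z‖ ^ 2 ≤ ‖x n - z‖ ^ 2 := by
    nlinarith [sq_nonneg ‖A (x n) - A z‖,
      mul_nonneg (mul_nonneg (by linarith : (0:ℝ) ≤ 1 - an) hl0) (sq_nonneg ‖A (x n) - A z‖)]
  refine ⟨⟨main, neg⟩, ?_⟩
  nlinarith [norm_nonneg (x (n + 1) - z), norm_nonneg (x n - z)]
end

section
/- Let C be a nonempty closed convex subset of a real Hilbert space H, A : C → H an α-inverse strongly monotone mapping (α > 0), T : C → C nonexpansive with F = F(T) ∩ Ω ≠ ∅, {λ_n} ⊂ [a, b] ⊂ (0, 2α), {α_n} ⊂ [c, d] ⊂ (0, 1), and let {x_n}, {y_n} be generated from x₀ ∈ C by y_n = α_n x_n + (1 − α_n) T P_C(x_n − λ_n A x_n), x_{n+1} = T P_C(y_n − λ_n A y_n). Then for every z ∈ F the limit lim_{n→∞} ‖x_n − z‖ exists, lim_{n→∞} ‖Ax_n − Az‖ = 0, and the sequences {x_n} and {P_C(x_n − λ_n A x_n)} are bounded. -/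
open scoped RealInnerProductSpace
open Filter Topology

set_option maxHeartbeats 2000000

theorem stmt_12
    {H : Type*} [NormedAddCommGroup H] [InnerProductSpace ℝ H] [CompleteSpace H]
    (C : Set H) (hCne : C.Nonempty) (hCcl : IsClosed C) (hCcv : Convex ℝ C)
    (PC : H → H) (hPC : ∀ u : H, PC u ∈ C ∧ ∀ w ∈ C, ‖u - PC u‖ ≤ ‖u - w‖)
    (α : ℝ) (hα : 0 < α) (A : H → H)
    (hA : ∀ x ∈ C, ∀ y ∈ C, ⟪A x - A y, x - y⟫ ≥ α * ‖A x - A y‖ ^ 2)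
    (T : H → H) (hTmaps : Set.MapsTo T C C)
    (hT : ∀ x ∈ C, ∀ y ∈ C, ‖T x - T y‖ ≤ ‖x - y‖)
    (F : Set H)
    (hF : F = {x ∈ C | T x = x} ∩ {x ∈ C | ∀ y ∈ C, ⟪A x, y - x⟫ ≥ 0})
    (hFne : F.Nonempty)
    (a b c d : ℝ) (ha : 0 < a) (hab : a ≤ b) (hb : b < 2 * α)
    (hc : 0 < c) (hcd : c ≤ d) (hd : d < 1)
    (lam : ℕ → ℝ) (hlam : ∀ n, lam n ∈ Set.Icc a b)
    (alp : ℕ → ℝ) (halp : ∀ n, alp n ∈ Set.Icc c d)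
    (x y : ℕ → H) (hx0 : x 0 ∈ C)
    (hy : ∀ n, y n = alp n • x n + (1 - alp n) • T (PC (x n - lam n • A (x n))))
    (hx : ∀ n, x (n + 1) = T (PC (y n - lam n • A (y n)))) :
    (∀ z ∈ F, (∃ l : ℝ, Tendsto (fun n => ‖x n - z‖) atTop (𝓝 l)) ∧
      Tendsto (fun n => ‖A (x n) - A z‖) atTop (𝓝 0)) ∧
    Bornology.IsBounded (Set.range x) ∧
    Bornology.IsBounded (Set.range fun n => PC (x n - lam n • A (x n))) := by
  -- variational characterization of the projection
  have hvar : ∀ u : H, ∀ w ∈ C, ⟪u - PC u, w - PC u⟫ ≤ 0 := by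
    intro u
    haveI : Nonempty C := ⟨⟨PC u, (hPC u).1⟩⟩
    rw [← norm_eq_iInf_iff_real_inner_le_zero hCcv (hPC u).1]
    apply le_antisymm
    · exact le_ciInf fun w => (hPC u).2 w w.2
    · have hbb : BddBelow (Set.range fun w : C => ‖u - w‖) := by
        refine ⟨0, ?_⟩
        rintro r ⟨w, rfl⟩
        exact norm_nonneg _
      exact ciInf_le hbb ⟨PC u, (hPC u).1⟩
  -- key: if v is the projection of u, then ‖PC u' - v‖ ≤ ‖u' - u‖
  have key : ∀ (u u' v : H), v ∈ C → (∀ w ∈ C, ⟪u - v, w - v⟫ ≤ 0) →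
      ‖PC u' - v‖ ≤ ‖u' - u‖ := by
    intro u u' v hvC hv
    have h1 : ⟪u' - PC u', v - PC u'⟫ ≤ 0 := hvar u' v hvC
    have h2 : ⟪u - v, PC u' - v⟫ ≤ 0 := hv _ (hPC u').1
    have e : ⟪u' - u, PC u' - v⟫ =
        -⟪u' - PC u', v - PC u'⟫ + ‖PC u' - v‖ ^ 2 - ⟪u - v, PC u' - v⟫ := by
      have hn : ‖PC u' - v‖ ^ 2 = ⟪PC u' - v, PC u' - v⟫ := (real_inner_self_eq_norm_sq _).symm
      rw [hn]
      simp only [inner_sub_left, inner_sub_right]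
      ring
    have h3 : ‖PC u' - v‖ ^ 2 ≤ ⟪u' - u, PC u' - v⟫ := by rw [e]; linarith
    have h4 : ⟪u' - u, PC u' - v⟫ ≤ ‖u' - u‖ * ‖PC u' - v‖ := real_inner_le_norm _ _
    rcases (norm_nonneg (PC u' - v)).eq_or_lt with h0 | h0
    · rw [← h0]; exact norm_nonneg _
    · have : ‖PC u' - v‖ * ‖PC u' - v‖ ≤ ‖u' - u‖ * ‖PC u' - v‖ := by nlinarith
      exact le_of_mul_le_mul_right this h0
  -- quantitative estimate for the auxiliary mapping
  have hAest : ∀ w ∈ C, ∀ z ∈ C, ∀ n : ℕ,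
      ‖(w - lam n • A w) - (z - lam n • A z)‖ ^ 2 ≤
        ‖w - z‖ ^ 2 + lam n * (lam n - 2 * α) * ‖A w - A z‖ ^ 2 := by
    intro w hw z hz n
    have hre : (w - lam n • A w) - (z - lam n • A z) = (w - z) - lam n • (A w - A z) := by
      rw [smul_sub]; abel
    rw [hre, norm_sub_sq_real, real_inner_smul_right, norm_smul, mul_pow]
    have hmono := hA w hw z hz
    have hinner : ⟪w - z, A w - A z⟫ = ⟪A w - A z, w - z⟫ := real_inner_comm _ _
    have hl := (hlam n).1
    have hsq : ‖lam n‖ ^ 2 = lam n ^ 2 := by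
      rw [Real.norm_eq_abs, sq_abs]
    rw [hinner, hsq]
    nlinarith [sq_nonneg (‖A w - A z‖), mul_nonneg (le_of_lt (lt_of_lt_of_le ha hl))
      (le_of_lt (lt_of_lt_of_le ha hl))]
  -- membership facts
  set t : ℕ → H := fun n => PC (x n - lam n • A (x n)) with ht
  have htC : ∀ n, t n ∈ C := fun n => (hPC _).1
  have hxC : ∀ n, x n ∈ C := by
    intro n
    induction n with
    | zero => exact hx0
    | succ k _ => rw [hx k]; exact hTmaps (hPC _).1
  have hTtC : ∀ n, T (t n) ∈ C := fun n => hTmaps (htC n)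
  have halp0 : ∀ n, 0 ≤ alp n := fun n => le_of_lt (lt_of_lt_of_le hc (halp n).1)
  have halp1 : ∀ n, 0 ≤ 1 - alp n := fun n => by linarith [(halp n).2]
  have hyC : ∀ n, y n ∈ C := by
    intro n
    rw [hy n]
    exact hCcv (hxC n) (hTtC n) (halp0 n) (halp1 n) (by ring)
  -- master facts for each z ∈ F
  have master : ∀ z ∈ F, (∀ n, ‖x (n + 1) - z‖ ≤ ‖x n - z‖) ∧
      (∀ n, ‖t n - z‖ ≤ ‖x n - z‖) ∧
      Tendsto (fun n => ‖A (x n) - A z‖) atTop (𝓝 0) := by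
    intro z hz
    rw [hF] at hz
    obtain ⟨⟨hzC, hTz⟩, -, hVI⟩ := hz
    -- z is the projection of z - lam n • A z
    have hzvar : ∀ n, ∀ w ∈ C, ⟪(z - lam n • A z) - z, w - z⟫ ≤ 0 := by
      intro n w hw
      have : (z - lam n • A z) - z = -(lam n • A z) := by abel
      rw [this, inner_neg_left, real_inner_smul_left]
      have h1 := hVI w hw
      have h2 := (hlam n).1
      nlinarith
    have hK : ∀ n, 0 < lam n * (2 * α - lam n) := by
      intro n
      have h1 := (hlam n).1; have h2 := (hlam n).2
      have : 0 < lam n := lt_of_lt_of_le ha h1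
      nlinarith
    -- squared estimates
    have Et : ∀ n, ‖t n - z‖ ^ 2 ≤
        ‖x n - z‖ ^ 2 + lam n * (lam n - 2 * α) * ‖A (x n) - A z‖ ^ 2 := by
      intro n
      have h1 : ‖t n - z‖ ≤ ‖(x n - lam n • A (x n)) - (z - lam n • A z)‖ :=
        key _ _ z hzC (hzvar n)
      have h2 := hAest (x n) (hxC n) z hzC n
      calc ‖t n - z‖ ^ 2 ≤ ‖(x n - lam n • A (x n)) - (z - lam n • A z)‖ ^ 2 :=
            pow_le_pow_left₀ (norm_nonneg _) h1 2
        _ ≤ _ := h2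
    have Etle : ∀ n, ‖t n - z‖ ≤ ‖x n - z‖ := by
      intro n
      have h1 := Et n
      have h2 : lam n * (lam n - 2 * α) * ‖A (x n) - A z‖ ^ 2 ≤ 0 := by
        have := hK n
        nlinarith [sq_nonneg (‖A (x n) - A z‖)]
      nlinarith [norm_nonneg (t n - z), norm_nonneg (x n - z)]
    have Ex : ∀ n, ‖x (n + 1) - z‖ ^ 2 ≤ ‖y n - z‖ ^ 2 := by
      intro n
      have h1 : ‖x (n + 1) - z‖ ≤ ‖PC (y n - lam n • A (y n)) - z‖ := by
        rw [hx n]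
        have := hT (PC (y n - lam n • A (y n))) (hPC _).1 z hzC
        rwa [hTz] at this
      have h2 : ‖PC (y n - lam n • A (y n)) - z‖ ≤
          ‖(y n - lam n • A (y n)) - (z - lam n • A z)‖ := key _ _ z hzC (hzvar n)
      have h3 := hAest (y n) (hyC n) z hzC n
      have h4 : lam n * (lam n - 2 * α) * ‖A (y n) - A z‖ ^ 2 ≤ 0 := by
        have := hK n
        nlinarith [sq_nonneg (‖A (y n) - A z‖)]
      calc ‖x (n + 1) - z‖ ^ 2 ≤ ‖(y n - lam n • A (y n)) - (z - lam n • A z)‖ ^ 2 := by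
            apply pow_le_pow_left₀ (norm_nonneg _) (le_trans h1 h2) 2
        _ ≤ ‖y n - z‖ ^ 2 + lam n * (lam n - 2 * α) * ‖A (y n) - A z‖ ^ 2 := h3
        _ ≤ ‖y n - z‖ ^ 2 := by linarith
    have Ey : ∀ n, ‖y n - z‖ ^ 2 ≤
        alp n * ‖x n - z‖ ^ 2 + (1 - alp n) * ‖T (t n) - z‖ ^ 2 := by
      intro n
      have hrw : y n - z = alp n • (x n - z) + (1 - alp n) • (T (t n) - z) := by
        simp only [ht, hy n]
        module
      have h1 : ‖y n - z‖ ≤ alp n * ‖x n - z‖ + (1 - alp n) * ‖T (t n) - z‖ := by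
        rw [hrw]
        calc ‖alp n • (x n - z) + (1 - alp n) • (T (t n) - z)‖ ≤
              ‖alp n • (x n - z)‖ + ‖(1 - alp n) • (T (t n) - z)‖ := norm_add_le _ _
          _ = alp n * ‖x n - z‖ + (1 - alp n) * ‖T (t n) - z‖ := by
              rw [norm_smul, norm_smul, Real.norm_eq_abs, Real.norm_eq_abs,
                abs_of_nonneg (halp0 n), abs_of_nonneg (halp1 n)]
      have hs := halp0 n; have hs' := halp1 n
      nlinarith [norm_nonneg (y n - z), norm_nonneg (x n - z), norm_nonneg (T (t n) - z),
        mul_nonneg hs hs', sq_nonneg (‖x n - z‖ - ‖T (t n) - z‖)]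
    have ETt : ∀ n, ‖T (t n) - z‖ ≤ ‖t n - z‖ := by
      intro n
      have := hT (t n) (htC n) z hzC
      rwa [hTz] at this
    -- main recursion
    set K : ℝ := (1 - d) * (a * (2 * α - b)) with hKdef
    have hKpos : 0 < K := by
      apply mul_pos (by linarith) (mul_pos ha (by linarith))
    have main : ∀ n, ‖x (n + 1) - z‖ ^ 2 + K * ‖A (x n) - A z‖ ^ 2 ≤ ‖x n - z‖ ^ 2 := by
      intro n
      have e1 := Ex n
      have e2 := Ey n
      have e3 := ETt n
      have Et' := Et n
      have e3' : ‖T (t n) - z‖ ^ 2 ≤ ‖t n - z‖ ^ 2 :=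
        pow_le_pow_left₀ (norm_nonneg _) e3 2
      -- (1 - alp n) * (lam n * (2α - lam n)) ≥ K
      have hfac : K ≤ (1 - alp n) * (lam n * (2 * α - lam n)) := by
        have h1 := (hlam n).1; have h2 := (hlam n).2
        have h3 := (halp n).2
        have hl : 0 < lam n := lt_of_lt_of_le ha h1
        have : a * (2 * α - b) ≤ lam n * (2 * α - lam n) := by nlinarith
        have h1d : (0:ℝ) < 1 - d := by linarith
        have h1a : 1 - d ≤ 1 - alp n := by linarith
        calc K ≤ (1 - d) * (lam n * (2 * α - lam n)) := by
              apply mul_le_mul_of_nonneg_left this (le_of_lt h1d)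
          _ ≤ (1 - alp n) * (lam n * (2 * α - lam n)) := by
              apply mul_le_mul_of_nonneg_right h1a (le_of_lt (hK n))
      have hsq : 0 ≤ ‖A (x n) - A z‖ ^ 2 := sq_nonneg _
      have A1 : (1 - alp n) * ‖T (t n) - z‖ ^ 2 ≤ (1 - alp n) * ‖t n - z‖ ^ 2 :=
        mul_le_mul_of_nonneg_left e3' (halp1 n)
      have A2 : (1 - alp n) * ‖t n - z‖ ^ 2 ≤
          (1 - alp n) * (‖x n - z‖ ^ 2 + lam n * (lam n - 2 * α) * ‖A (x n) - A z‖ ^ 2) :=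
        mul_le_mul_of_nonneg_left Et' (halp1 n)
      have A4 : K * ‖A (x n) - A z‖ ^ 2 ≤
          ((1 - alp n) * (lam n * (2 * α - lam n))) * ‖A (x n) - A z‖ ^ 2 :=
        mul_le_mul_of_nonneg_right hfac hsq
      have expand : (1 - alp n) * (‖x n - z‖ ^ 2 +
            lam n * (lam n - 2 * α) * ‖A (x n) - A z‖ ^ 2) =
          ‖x n - z‖ ^ 2 - alp n * ‖x n - z‖ ^ 2 -
            ((1 - alp n) * (lam n * (2 * α - lam n))) * ‖A (x n) - A z‖ ^ 2 := by ring
      linarith [e1, e2, A1, A2, A4, expand]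
    have hmono : ∀ n, ‖x (n + 1) - z‖ ≤ ‖x n - z‖ := by
      intro n
      have h1 := main n
      have h2 : 0 ≤ K * ‖A (x n) - A z‖ ^ 2 := mul_nonneg (le_of_lt hKpos) (sq_nonneg _)
      nlinarith [norm_nonneg (x (n + 1) - z), norm_nonneg (x n - z)]
    refine ⟨hmono, Etle, ?_⟩
    -- convergence of norms and of the squared sequence
    have hant : Antitone fun n => ‖x n - z‖ := antitone_nat_of_succ_le hmono
    have hbdd : BddBelow (Set.range fun n => ‖x n - z‖) :=
      ⟨0, fun _ ⟨n, hn⟩ => hn ▸ norm_nonneg _⟩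
    have hlim : Tendsto (fun n => ‖x n - z‖) atTop (𝓝 (⨅ n, ‖x n - z‖)) :=
      tendsto_atTop_ciInf hant hbdd
    set L := ⨅ n, ‖x n - z‖ with hL
    have hs : Tendsto (fun n => ‖x n - z‖ ^ 2) atTop (𝓝 (L ^ 2)) := hlim.pow 2
    have hs' : Tendsto (fun n => ‖x (n + 1) - z‖ ^ 2) atTop (𝓝 (L ^ 2)) :=
      hs.comp (tendsto_add_atTop_nat 1)
    have hdiff : Tendsto (fun n => ‖x n - z‖ ^ 2 - ‖x (n + 1) - z‖ ^ 2) atTop (𝓝 0) := by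
      have := hs.sub hs'
      simpa using this
    have hsq0 : Tendsto (fun n => ‖A (x n) - A z‖ ^ 2) atTop (𝓝 0) := by
      apply squeeze_zero (fun n => sq_nonneg _) (g := fun n =>
        (‖x n - z‖ ^ 2 - ‖x (n + 1) - z‖ ^ 2) / K)
      · intro n
        rw [le_div_iff₀ hKpos]
        have := main n
        linarith [mul_comm (‖A (x n) - A z‖ ^ 2) K]
      · have := hdiff.div_const K
        simpa using this
    have := hsq0.sqrt
    simp only [Real.sqrt_zero] at this
    convert this using 2 with n
    rw [Real.sqrt_sq (norm_nonneg _)]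
  obtain ⟨z₀, hz₀⟩ := hFne
  obtain ⟨hm₀, ht₀, -⟩ := master z₀ hz₀
  have hant₀ : Antitone fun n => ‖x n - z₀‖ := antitone_nat_of_succ_le hm₀
  have hx_le : ∀ n, ‖x n - z₀‖ ≤ ‖x 0 - z₀‖ := fun n => hant₀ (Nat.zero_le n)
  refine ⟨fun z hz => ?_, ?_, ?_⟩
  · obtain ⟨hm, -, hA0⟩ := master z hz
    refine ⟨⟨⨅ n, ‖x n - z‖, tendsto_atTop_ciInf (antitone_nat_of_succ_le hm)
      ⟨0, fun _ ⟨n, hn⟩ => hn ▸ norm_nonneg _⟩⟩, hA0⟩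
  · apply Bornology.IsBounded.subset (Metric.isBounded_closedBall
      (x := z₀) (r := ‖x 0 - z₀‖))
    rintro _ ⟨n, rfl⟩
    rw [Metric.mem_closedBall, dist_eq_norm]
    exact hx_le n
  · apply Bornology.IsBounded.subset (Metric.isBounded_closedBall
      (x := z₀) (r := ‖x 0 - z₀‖))
    rintro _ ⟨n, rfl⟩
    rw [Metric.mem_closedBall, dist_eq_norm]
    exact le_trans (ht₀ n) (hx_le n)
end

section
/- Let C be a nonempty closed convex subset of a real Hilbert space H, A : C → H an α-inverse strongly monotone mapping (α > 0), T : C → C nonexpansive with F = F(T) ∩ Ω ≠ ∅, {λ_n} ⊂ [a, b] ⊂ (0, 2α), {α_n} ⊂ [c, d] ⊂ (0, 1), and let {x_n}, {y_n} be generated from x₀ ∈ C by t_n = P_C(x_n − λ_n A x_n), y_n = α_n x_n + (1 − α_n) T t_n, x_{n+1} = T P_C(y_n − λ_n A y_n). Then lim_{n→∞} ‖x_n − T t_n‖ = 0 and lim_{n→∞} ‖x_n − y_n‖ = 0. -/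
/-! Fix `p ∈ F`. Since `p` solves the variational inequality it is a fixed point of every
projected gradient step `u ↦ P_C (u - λ A u)` with `λ ≥ 0`, and for `λ ≤ 2α` that step is
nonexpansive towards `p`. So both half-steps of the iteration move no farther from `p`, and the
strong convexity of `‖·‖²` in the averaging step gives the Fejér inequality
`‖x_{n+1} - p‖² + α_n (1 - α_n) ‖x_n - T t_n‖² ≤ ‖x_n - p‖²`.
As `α_n (1 - α_n) ≥ c (1 - d) > 0`, the decreasing sequence `‖x_n - p‖²` forces
`‖x_n - T t_n‖ → 0`, and `x_n - y_n = (1 - α_n) (x_n - T t_n)`. -/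

open scoped RealInnerProductSpace
open Filter Topology

section

variable {H : Type*} [NormedAddCommGroup H] [InnerProductSpace ℝ H] {K : Set H} {P : H → H}

def IsNearestPointMap (K : Set H) (P : H → H) : Prop :=
  ∀ u, P u ∈ K ∧ ∀ w ∈ K, ‖u - P u‖ ≤ ‖u - w‖

theorem IsNearestPointMap.inner_le_zero (hP : IsNearestPointMap K P) (hK : Convex ℝ K) (u : H) :
    ∀ w ∈ K, ⟪u - P u, w - P u⟫ ≤ 0 := by
  have : Nonempty K := ⟨⟨P u, (hP u).1⟩⟩
  refine (norm_eq_iInf_iff_real_inner_le_zero hK (hP u).1).1 (le_antisymm ?_ ?_)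
  · exact le_ciInf fun w => (hP u).2 w w.2
  · exact ciInf_le (f := fun w : K => ‖u - (w : H)‖) ⟨0, by rintro _ ⟨w, rfl⟩; exact norm_nonneg _⟩
      ⟨P u, (hP u).1⟩

theorem IsNearestPointMap.eq_of_inner_le_zero (hP : IsNearestPointMap K P) (hK : Convex ℝ K)
    {u p : H} (hp : p ∈ K) (h : ∀ w ∈ K, ⟪u - p, w - p⟫ ≤ 0) : P u = p := by
  have h₁ := hP.inner_le_zero hK u p hp
  have h₂ := h (P u) (hP u).1
  have hsum : ⟪u - P u, p - P u⟫ + ⟪u - p, P u - p⟫ = ‖p - P u‖ ^ 2 := by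
    rw [← real_inner_self_eq_norm_sq]
    simp only [inner_sub_left, inner_sub_right, real_inner_comm]
    ring
  have : ‖p - P u‖ = 0 := by nlinarith [norm_nonneg (p - P u)]
  exact (sub_eq_zero.mp (norm_eq_zero.mp this)).symm

theorem IsNearestPointMap.norm_sub_le (hP : IsNearestPointMap K P) (hK : Convex ℝ K) (u v : H) :
    ‖P u - P v‖ ≤ ‖u - v‖ := by
  have h₁ := hP.inner_le_zero hK u (P v) (hP v).1
  have h₂ := hP.inner_le_zero hK v (P u) (hP u).1
  have hfirm : ‖P u - P v‖ ^ 2 ≤ ⟪u - v, P u - P v⟫ := by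
    have e : ⟪u - v, P u - P v⟫
        = ‖P u - P v‖ ^ 2 - ⟪u - P u, P v - P u⟫ - ⟪v - P v, P u - P v⟫ := by
      rw [← real_inner_self_eq_norm_sq]
      simp only [inner_sub_left, inner_sub_right]
      ring
    linarith
  nlinarith [real_inner_le_norm (u - v) (P u - P v), norm_nonneg (P u - P v), norm_nonneg (u - v)]

theorem IsNearestPointMap.apply_sub_smul_eq_of_forall_inner_nonneg (hP : IsNearestPointMap K P)
    (hK : Convex ℝ K) {A : H → H} {p : H} (hp : p ∈ K) (hVI : ∀ w ∈ K, 0 ≤ ⟪A p, w - p⟫)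
    {l : ℝ} (hl : 0 ≤ l) : P (p - l • A p) = p := by
  refine hP.eq_of_inner_le_zero hK hp fun w hw => ?_
  rw [sub_sub_cancel_left, inner_neg_left, real_inner_smul_left]
  exact neg_nonpos.mpr (mul_nonneg hl (hVI w hw))

theorem norm_sub_smul_le_of_mul_norm_sq_le_inner {α l : ℝ} {e g : H}
    (h : α * ‖g‖ ^ 2 ≤ ⟪g, e⟫) (hl₀ : 0 ≤ l) (hl : l ≤ 2 * α) : ‖e - l • g‖ ≤ ‖e‖ := by
  refine pow_le_pow_iff_left₀ (norm_nonneg _) (norm_nonneg _) two_ne_zero |>.mp ?_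
  rw [norm_sub_sq_real, real_inner_smul_right, real_inner_comm, norm_smul, Real.norm_eq_abs,
    mul_pow, sq_abs]
  nlinarith [mul_nonneg hl₀ (sub_nonneg.mpr h),
    mul_nonneg (mul_nonneg hl₀ (sub_nonneg.mpr hl)) (sq_nonneg ‖g‖)]

theorem IsNearestPointMap.norm_apply_sub_smul_sub_le (hP : IsNearestPointMap K P) (hK : Convex ℝ K) {α : ℝ} {A : H → H}
    (hA : ∀ x ∈ K, ∀ y ∈ K, ⟪A x - A y, x - y⟫ ≥ α * ‖A x - A y‖ ^ 2)
    {p : H} (hp : p ∈ K) (hVI : ∀ w ∈ K, 0 ≤ ⟪A p, w - p⟫)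
    {l : ℝ} (hl₀ : 0 ≤ l) (hl : l ≤ 2 * α) {u : H} (hu : u ∈ K) :
    ‖P (u - l • A u) - p‖ ≤ ‖u - p‖ := by
  calc ‖P (u - l • A u) - p‖ = ‖P (u - l • A u) - P (p - l • A p)‖ := by
        rw [hP.apply_sub_smul_eq_of_forall_inner_nonneg hK hp hVI hl₀]
    _ ≤ ‖(u - p) - l • (A u - A p)‖ := by
        convert hP.norm_sub_le hK _ _ using 2
        rw [smul_sub]
        abel
    _ ≤ ‖u - p‖ := norm_sub_smul_le_of_mul_norm_sq_le_inner (hA u hu p hp) hl₀ hl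

theorem norm_sq_convex_comb_sub_le {s : ℝ} (hs : s ≤ 1) {x z p : H} (hz : ‖z - p‖ ≤ ‖x - p‖) :
    ‖s • x + (1 - s) • z - p‖ ^ 2 + s * (1 - s) * ‖x - z‖ ^ 2 ≤ ‖x - p‖ ^ 2 := by
  have hcomb : s • x + (1 - s) • z - p = s • (x - p) + (1 - s) • (z - p) := by module
  have hdiff : x - z = (x - p) - (z - p) := by abel
  have hid : ‖s • (x - p) + (1 - s) • (z - p)‖ ^ 2 + s * (1 - s) * ‖(x - p) - (z - p)‖ ^ 2
      = s * ‖x - p‖ ^ 2 + (1 - s) * ‖z - p‖ ^ 2 := by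
    simp only [← real_inner_self_eq_norm_sq, inner_add_left, inner_add_right, inner_sub_left,
      inner_sub_right, real_inner_smul_left, real_inner_smul_right, real_inner_comm (x - p)]
    ring
  rw [hcomb, hdiff, hid]
  nlinarith [pow_le_pow_left₀ (norm_nonneg _) hz 2]

end

theorem tendsto_zero_of_add_mul_le {s u : ℕ → ℝ} {κ : ℝ} (hκ : 0 < κ) (hs : ∀ n, 0 ≤ s n)
    (hu : ∀ n, 0 ≤ u n) (h : ∀ n, s (n + 1) + κ * u n ≤ s n) : Tendsto u atTop (𝓝 0) := by
  have hanti : Antitone s := antitone_nat_of_succ_le fun n => by nlinarith [h n, hu n]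
  have hconv := tendsto_atTop_ciInf hanti ⟨0, by rintro _ ⟨n, rfl⟩; exact hs n⟩
  have hdiff : Tendsto (fun n => (s n - s (n + 1)) / κ) atTop (𝓝 0) := by
    simpa using (hconv.sub (hconv.comp (tendsto_add_atTop_nat 1))).div_const κ
  refine squeeze_zero hu (fun n => ?_) hdiff
  rw [le_div_iff₀ hκ]
  linarith [h n]

theorem stmt_13_general
    {H : Type*} [NormedAddCommGroup H] [InnerProductSpace ℝ H]
    (C : Set H) (hCcv : Convex ℝ C)
    (PC : H → H) (hPC : ∀ u : H, PC u ∈ C ∧ ∀ w ∈ C, ‖u - PC u‖ ≤ ‖u - w‖)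
    (α : ℝ) (A : H → H)
    (hA : ∀ x ∈ C, ∀ y ∈ C, ⟪A x - A y, x - y⟫ ≥ α * ‖A x - A y‖ ^ 2)
    (T : H → H) (hTmaps : Set.MapsTo T C C)
    (hT : ∀ x ∈ C, ∀ y ∈ C, ‖T x - T y‖ ≤ ‖x - y‖)
    (F : Set H)
    (hF : F = {x ∈ C | T x = x} ∩ {x ∈ C | ∀ y ∈ C, ⟪A x, y - x⟫ ≥ 0})
    (hFne : F.Nonempty)
    (a b c d : ℝ) (ha : 0 < a) (hb : b < 2 * α)
    (hc : 0 < c) (hd : d < 1)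
    (lam : ℕ → ℝ) (hlam : ∀ n, lam n ∈ Set.Icc a b)
    (alp : ℕ → ℝ) (halp : ∀ n, alp n ∈ Set.Icc c d)
    (x y t : ℕ → H) (hx0 : x 0 ∈ C)
    (ht : ∀ n, t n = PC (x n - lam n • A (x n)))
    (hy : ∀ n, y n = alp n • x n + (1 - alp n) • T (t n))
    (hx : ∀ n, x (n + 1) = T (PC (y n - lam n • A (y n)))) :
    Tendsto (fun n => ‖x n - T (t n)‖) atTop (𝓝 0) ∧
    Tendsto (fun n => ‖x n - y n‖) atTop (𝓝 0) := by
  obtain ⟨p, ⟨hpC, hTp⟩, -, hVI⟩ := hF ▸ hFne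
  have hstep : ∀ n, ∀ u ∈ C, ‖T (PC (u - lam n • A u)) - p‖ ≤ ‖u - p‖ := fun n u hu =>
    calc ‖T (PC (u - lam n • A u)) - p‖ ≤ ‖PC (u - lam n • A u) - p‖ := by
          simpa only [hTp] using hT _ (hPC _).1 p hpC
      _ ≤ ‖u - p‖ := IsNearestPointMap.norm_apply_sub_smul_sub_le hPC hCcv hA hpC hVI
          (ha.le.trans (hlam n).1) ((hlam n).2.trans hb.le) hu
  have hxC : ∀ n, x n ∈ C := Nat.rec hx0 fun n _ => hx n ▸ hTmaps (hPC _).1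
  have hyC : ∀ n, y n ∈ C := fun n => hy n ▸ hCcv (hxC n) (hTmaps (ht n ▸ (hPC _).1))
    (hc.le.trans (halp n).1) (by linarith [(halp n).2]) (by ring)
  have hfejer : ∀ n, ‖x (n + 1) - p‖ ^ 2 + c * (1 - d) * ‖x n - T (t n)‖ ^ 2 ≤ ‖x n - p‖ ^ 2 := by
    intro n
    obtain ⟨hc_le, hle_d⟩ := halp n
    have hmann := norm_sq_convex_comb_sub_le (by linarith) (ht n ▸ hstep n (x n) (hxC n))
    have hnext := pow_le_pow_left₀ (norm_nonneg _) (hx n ▸ hstep n (y n) (hyC n)) 2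
    rw [← hy n] at hmann
    have hκ : c * (1 - d) ≤ alp n * (1 - alp n) := by
      linarith [mul_nonneg (sub_nonneg.mpr hc_le) (by linarith : (0 : ℝ) ≤ 1 - alp n),
        mul_nonneg hc.le (sub_nonneg.mpr hle_d)]
    linarith [mul_le_mul_of_nonneg_right hκ (sq_nonneg ‖x n - T (t n)‖)]
  have hlim := (tendsto_zero_of_add_mul_le (s := fun n => ‖x n - p‖ ^ 2)
    (u := fun n => ‖x n - T (t n)‖ ^ 2) (mul_pos hc (by linarith)) (fun n => sq_nonneg _)
    (fun n => sq_nonneg _) hfejer).sqrt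
  simp only [Real.sqrt_sq (norm_nonneg _), Real.sqrt_zero] at hlim
  refine ⟨hlim, squeeze_zero (fun n => norm_nonneg _) (fun n => ?_) hlim⟩
  obtain ⟨hc_le, hle_d⟩ := halp n
  have hxy : x n - y n = (1 - alp n) • (x n - T (t n)) := by rw [hy n]; module
  rw [hxy, norm_smul, Real.norm_of_nonneg (by linarith)]
  exact mul_le_of_le_one_left (norm_nonneg _) (by linarith)

theorem stmt_13
    {H : Type*} [NormedAddCommGroup H] [InnerProductSpace ℝ H] [CompleteSpace H]
    (C : Set H) (hCne : C.Nonempty) (hCcl : IsClosed C) (hCcv : Convex ℝ C)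
    (PC : H → H) (hPC : ∀ u : H, PC u ∈ C ∧ ∀ w ∈ C, ‖u - PC u‖ ≤ ‖u - w‖)
    (α : ℝ) (hα : 0 < α) (A : H → H)
    (hA : ∀ x ∈ C, ∀ y ∈ C, ⟪A x - A y, x - y⟫ ≥ α * ‖A x - A y‖ ^ 2)
    (T : H → H) (hTmaps : Set.MapsTo T C C)
    (hT : ∀ x ∈ C, ∀ y ∈ C, ‖T x - T y‖ ≤ ‖x - y‖)
    (F : Set H)
    (hF : F = {x ∈ C | T x = x} ∩ {x ∈ C | ∀ y ∈ C, ⟪A x, y - x⟫ ≥ 0})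
    (hFne : F.Nonempty)
    (a b c d : ℝ) (ha : 0 < a) (hab : a ≤ b) (hb : b < 2 * α)
    (hc : 0 < c) (hcd : c ≤ d) (hd : d < 1)
    (lam : ℕ → ℝ) (hlam : ∀ n, lam n ∈ Set.Icc a b)
    (alp : ℕ → ℝ) (halp : ∀ n, alp n ∈ Set.Icc c d)
    (x y t : ℕ → H) (hx0 : x 0 ∈ C)
    (ht : ∀ n, t n = PC (x n - lam n • A (x n)))
    (hy : ∀ n, y n = alp n • x n + (1 - alp n) • T (t n))
    (hx : ∀ n, x (n + 1) = T (PC (y n - lam n • A (y n)))) :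
    Tendsto (fun n => ‖x n - T (t n)‖) atTop (𝓝 0) ∧
    Tendsto (fun n => ‖x n - y n‖) atTop (𝓝 0) :=
  stmt_13_general C hCcv PC hPC α A hA T hTmaps hT F hF hFne a b c d ha hb hc hd lam hlam alp halp x
    y t hx0 ht hy hx
end
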